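/- arXiv:1607.03637 — 5 statements merged into one kernel-verified Lean document; each statement's English description precedes it below -/
import Mathlib

section
/- There is no function ⋆ : H_n × H_n → H_n on n-by-n Hermitian matrices (n ≥ 2) that is convex-bilinear, satisfies x⋆y = xy whenever xy = yx, satisfies Tr(x⋆y) = Tr(xy), and is associative. -/
open Matrix

namespace NoHermStar

variable {n : ℕ} {f : Matrix (Fin n) (Fin n) ℂ → Matrix (Fin n) (Fin n) ℂ → Matrix (Fin n) (Fin n) ℂ}

/-- Bundle of hypotheses. -/
structure Good (n : ℕ)
    (f : Matrix (Fin n) (Fin n) ℂ → Matrix (Fin n) (Fin n) ℂ → Matrix (Fin n) (Fin n) ℂ) :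
    Prop where
  herm : ∀ x y, x.IsHermitian → y.IsHermitian → (f x y).IsHermitian
  linL : ∀ p : ℝ, 0 ≤ p → p ≤ 1 → ∀ x y z, x.IsHermitian → y.IsHermitian → z.IsHermitian →
      f (p • x + (1 - p) • y) z = p • f x z + (1 - p) • f y z
  linR : ∀ p : ℝ, 0 ≤ p → p ≤ 1 → ∀ x y z, x.IsHermitian → y.IsHermitian → z.IsHermitian →
      f x (p • y + (1 - p) • z) = p • f x y + (1 - p) • f x z
  comm : ∀ x y, x.IsHermitian → y.IsHermitian → x * y = y * x → f x y = x * y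
  assoc : ∀ x y z, x.IsHermitian → y.IsHermitian → z.IsHermitian →
      f x (f y z) = f (f x y) z

theorem Good.zero_left (hf : Good n f) {z} (hz : z.IsHermitian) : f 0 z = 0 := by
  rw [hf.comm 0 z isHermitian_zero hz (by rw [zero_mul, mul_zero]), zero_mul]

theorem Good.zero_right (hf : Good n f) {z} (hz : z.IsHermitian) : f z 0 = 0 := by
  rw [hf.comm z 0 hz isHermitian_zero (by rw [zero_mul, mul_zero]), mul_zero]

theorem Good.smul01_left (hf : Good n f) {p : ℝ} (hp0 : 0 ≤ p) (hp1 : p ≤ 1) {x z}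
    (hx : x.IsHermitian) (hz : z.IsHermitian) : f (p • x) z = p • f x z := by
  have h := hf.linL p hp0 hp1 x 0 z hx isHermitian_zero hz
  rw [smul_zero, add_zero, hf.zero_left hz, smul_zero, add_zero] at h
  exact h

theorem Good.smul01_right (hf : Good n f) {p : ℝ} (hp0 : 0 ≤ p) (hp1 : p ≤ 1) {x z}
    (hx : x.IsHermitian) (hz : z.IsHermitian) : f x (p • z) = p • f x z := by
  have h := hf.linR p hp0 hp1 x z 0 hx hz isHermitian_zero
  rw [smul_zero, add_zero, hf.zero_right hx, smul_zero, add_zero] at h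
  exact h


theorem hermSmul {A : Matrix (Fin n) (Fin n) ℂ} (r : ℝ) (hA : A.IsHermitian) :
    (r • A).IsHermitian := by
  rw [Matrix.IsHermitian, Matrix.conjTranspose_smul, hA.eq, star_trivial]

theorem Good.add_left (hf : Good n f) {x y z} (hx : x.IsHermitian) (hy : y.IsHermitian)
    (hz : z.IsHermitian) : f (x + y) z = f x z + f y z := by
  have h := hf.linL (2⁻¹) (by norm_num) (by norm_num) x y z hx hy hz
  have h2 : (1 - 2⁻¹ : ℝ) = 2⁻¹ := by norm_num
  rw [h2] at h
  have h3 : (2⁻¹:ℝ) • x + (2⁻¹:ℝ) • y = (2⁻¹:ℝ) • (x + y) := (smul_add _ _ _).symm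
  rw [h3, hf.smul01_left (by norm_num) (by norm_num) (hx.add hy) hz] at h
  have h4 : (2⁻¹:ℝ) • f x z + (2⁻¹:ℝ) • f y z = (2⁻¹:ℝ) • (f x z + f y z) :=
    (smul_add _ _ _).symm
  rw [h4] at h
  exact smul_right_injective _ (by norm_num : (2⁻¹:ℝ) ≠ 0) h

theorem Good.add_right (hf : Good n f) {x y z} (hx : x.IsHermitian) (hy : y.IsHermitian)
    (hz : z.IsHermitian) : f x (y + z) = f x y + f x z := by
  have h := hf.linR (2⁻¹) (by norm_num) (by norm_num) x y z hx hy hz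
  have h2 : (1 - 2⁻¹ : ℝ) = 2⁻¹ := by norm_num
  rw [h2] at h
  have h3 : (2⁻¹:ℝ) • y + (2⁻¹:ℝ) • z = (2⁻¹:ℝ) • (y + z) := (smul_add _ _ _).symm
  rw [h3, hf.smul01_right (by norm_num) (by norm_num) hx (hy.add hz)] at h
  have h4 : (2⁻¹:ℝ) • f x y + (2⁻¹:ℝ) • f x z = (2⁻¹:ℝ) • (f x y + f x z) :=
    (smul_add _ _ _).symm
  rw [h4] at h
  exact smul_right_injective _ (by norm_num : (2⁻¹:ℝ) ≠ 0) h

theorem Good.neg_left (hf : Good n f) {x z} (hx : x.IsHermitian) (hz : z.IsHermitian) :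
    f (-x) z = -f x z := by
  have h := hf.add_left hx hx.neg hz
  rw [add_neg_cancel, hf.zero_left hz] at h
  exact eq_neg_of_add_eq_zero_right h.symm

theorem Good.neg_right (hf : Good n f) {x z} (hx : x.IsHermitian) (hz : z.IsHermitian) :
    f x (-z) = -f x z := by
  have h := hf.add_right hx hz hz.neg
  rw [add_neg_cancel, hf.zero_right hx] at h
  exact eq_neg_of_add_eq_zero_right h.symm

theorem Good.sub_left (hf : Good n f) {x y z} (hx : x.IsHermitian) (hy : y.IsHermitian)
    (hz : z.IsHermitian) : f (x - y) z = f x z - f y z := by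
  rw [sub_eq_add_neg, sub_eq_add_neg, hf.add_left hx hy.neg hz, hf.neg_left hy hz]

theorem Good.sub_right (hf : Good n f) {x y z} (hx : x.IsHermitian) (hy : y.IsHermitian)
    (hz : z.IsHermitian) : f x (y - z) = f x y - f x z := by
  rw [sub_eq_add_neg, sub_eq_add_neg, hf.add_right hx hy hz.neg, hf.neg_right hx hz]

theorem Good.smul_nonneg_left (hf : Good n f) {r : ℝ} (hr : 0 ≤ r) {x z}
    (hx : x.IsHermitian) (hz : z.IsHermitian) : f (r • x) z = r • f x z := by
  rcases le_or_gt r 1 with h1 | h1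
  · exact hf.smul01_left hr h1 hx hz
  · have hr0 : (0:ℝ) < r := by linarith
    have h := hf.smul01_left (p := r⁻¹) (by positivity) (by
      rw [inv_le_one_iff₀]; right; linarith) (hermSmul r hx) hz
    rw [smul_smul, inv_mul_cancel₀ (ne_of_gt hr0), one_smul] at h
    rw [h, smul_smul, mul_inv_cancel₀ (ne_of_gt hr0), one_smul]

theorem Good.smul_left (hf : Good n f) (r : ℝ) {x z}
    (hx : x.IsHermitian) (hz : z.IsHermitian) : f (r • x) z = r • f x z := by
  rcases le_or_gt 0 r with h1 | h1
  · exact hf.smul_nonneg_left h1 hx hz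
  · have h : (r • x) = -((-r) • x) := by rw [neg_smul, neg_neg]
    rw [h, hf.neg_left (hermSmul (-r) hx) hz,
      hf.smul_nonneg_left (by linarith) hx hz, neg_smul, neg_neg]

theorem Good.smul_nonneg_right (hf : Good n f) {r : ℝ} (hr : 0 ≤ r) {x z}
    (hx : x.IsHermitian) (hz : z.IsHermitian) : f x (r • z) = r • f x z := by
  rcases le_or_gt r 1 with h1 | h1
  · exact hf.smul01_right hr h1 hx hz
  · have hr0 : (0:ℝ) < r := by linarith
    have h := hf.smul01_right (p := r⁻¹) (by positivity) (by
      rw [inv_le_one_iff₀]; right; linarith) hx (hermSmul r hz)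
    rw [smul_smul, inv_mul_cancel₀ (ne_of_gt hr0), one_smul] at h
    rw [h, smul_smul, mul_inv_cancel₀ (ne_of_gt hr0), one_smul]

theorem Good.smul_right (hf : Good n f) (r : ℝ) {x z}
    (hx : x.IsHermitian) (hz : z.IsHermitian) : f x (r • z) = r • f x z := by
  rcases le_or_gt 0 r with h1 | h1
  · exact hf.smul_nonneg_right h1 hx hz
  · have h : (r • z) = -((-r) • z) := by rw [neg_smul, neg_neg]
    rw [h, hf.neg_right hx (hermSmul (-r) hz),
      hf.smul_nonneg_right (by linarith) hx hz, neg_smul, neg_neg]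

theorem Good.square (hf : Good n f) {x} (hx : x.IsHermitian) : f x x = x * x :=
  hf.comm x x hx hx rfl

theorem Good.sumsq (hf : Good n f) {x y} (hx : x.IsHermitian) (hy : y.IsHermitian) :
    f x y + f y x = x * y + y * x := by
  have h := hf.square (hx.add hy)
  rw [hf.add_left hx hy (hx.add hy), hf.add_right hx hx hy, hf.add_right hy hx hy,
    hf.square hx, hf.square hy, add_mul, mul_add, mul_add] at h
  have h4 : f x y + f y x + (x * x + y * y) = x * y + y * x + (x * x + y * y) := by
    calc f x y + f y x + (x * x + y * y)
        = x * x + f x y + (f y x + y * y) := by abel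
      _ = x * x + x * y + (y * x + y * y) := h
      _ = x * y + y * x + (x * x + y * y) := by abel
  exact add_right_cancel h4


/-- L1: for a projection `x`, the "commutator part" `C = f x y - f y x` satisfies
`x*C + C*x = C`. -/
theorem Good.L1 (hf : Good n f) {x y} (hx : x.IsHermitian) (hy : y.IsHermitian)
    (hp : x * x = x) :
    x * (f x y - f y x) + (f x y - f y x) * x = f x y - f y x := by
  set u := f x y with hu
  set v := f y x with hv
  have hub : u.IsHermitian := hf.herm x y hx hy
  have hvb : v.IsHermitian := hf.herm y x hy hx
  have hfxx : f x x = x := by rw [hf.square hx, hp]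
  have h1 : f x u = u := by
    rw [hu, hf.assoc x x y hx hx hy, hfxx]
  have h2 : f v x = v := by
    rw [hv, ← hf.assoc y x x hy hx hx, hfxx]
  have h3 : f x v = f u x := by
    rw [hu, hv, hf.assoc x y x hx hy hx]
  have h4 := hf.sumsq hub hx
  have h5 := hf.sumsq hx hvb
  rw [h1] at h4
  rw [h2] at h5
  have hfux : f u x = u * x + x * u - u := by
    rw [eq_sub_iff_add_eq, h4]
  have hfxv : f x v = x * v + v * x - v := by
    rw [eq_sub_iff_add_eq, h5]
  have K : u * x + x * u - u = x * v + v * x - v := by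
    rw [← hfux, ← h3, hfxv]
  calc x * (u - v) + (u - v) * x
      = (u * x + x * u - u) - (x * v + v * x - v) + (u - v) := by
        rw [mul_sub, sub_mul]; abel
    _ = (x * v + v * x - v) - (x * v + v * x - v) + (u - v) := by rw [K]
    _ = u - v := by abel

/-- L4: if moreover `x*y + y*x = y` and `x` commutes with `y*y`, then
`y*C + C*y = 0`. -/
theorem Good.L4 (hf : Good n f) {x y} (hx : x.IsHermitian) (hy : y.IsHermitian)
    (_hp : x * x = x) (hxy : x * y + y * x = y) (hc2 : x * (y * y) = (y * y) * x) :
    y * (f x y - f y x) + (f x y - f y x) * y = 0 := by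
  set u := f x y with hu
  set v := f y x with hv
  have hub : u.IsHermitian := hf.herm x y hx hy
  have hvb : v.IsHermitian := hf.herm y x hy hx
  have hyy : (y * y).IsHermitian := by
    rw [Matrix.IsHermitian, Matrix.conjTranspose_mul, hy.eq]
  have hfyy : f y y = y * y := hf.square hy
  have hfuy : f u y = x * (y * y) := by
    rw [hu, ← hf.assoc x y y hx hy hy, hfyy, hf.comm x (y * y) hx hyy hc2]
  have hfyv : f y v = x * (y * y) := by
    rw [hv, hf.assoc y y x hy hy hx, hfyy, hf.comm (y * y) x hyy hx hc2.symm, ← hc2]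
  have hsum : u + v = y := by rw [hu, hv, hf.sumsq hx hy, hxy]
  have hvyu : v = y - u := by rw [← hsum]; abel
  have h4 := hf.sumsq hub hy
  have hfyu : f y u = u * y + y * u - x * (y * y) := by
    rw [eq_sub_iff_add_eq, ← hfuy]; rw [add_comm] at h4; exact h4
  have h5 : f y v = f y y - f y u := by
    rw [hvyu, hf.sub_right hy hy hub]
  rw [hfyv, hfyy, hfyu] at h5
  have huy : u * y + y * u = y * y := by
    have h6 : x * (y * y) + (u * y + y * u)
        = (y * y - (u * y + y * u - x * (y * y))) + (u * y + y * u) := by rw [← h5]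
    have h7 : (y * y - (u * y + y * u - x * (y * y))) + (u * y + y * u)
        = y * y + x * (y * y) := by abel
    have h8 : (u * y + y * u) + x * (y * y) = y * y + x * (y * y) :=
      (add_comm _ _).trans (h6.trans h7)
    exact add_right_cancel h8
  calc y * (u - v) + (u - v) * y
      = y * (u - (y - u)) + (u - (y - u)) * y := by rw [hvyu]
    _ = (u * y + y * u) + (u * y + y * u) - (y * y + y * y) := by
        rw [mul_sub, sub_mul, mul_sub, sub_mul]; abel
    _ = (y * y) + (y * y) - (y * y + y * y) := by rw [huy]
    _ = 0 := by abel


/-- L3: for a projection `x` with `x*y + y*x = y`, we get `f x C - f C x = y`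
where `C = f x y - f y x`. -/
theorem Good.L3 (hf : Good n f) {x y} (hx : x.IsHermitian) (hy : y.IsHermitian)
    (hp : x * x = x) (hxy : x * y + y * x = y) :
    f x (f x y - f y x) - f (f x y - f y x) x = y := by
  set u := f x y with hu
  set v := f y x with hv
  have hub : u.IsHermitian := hf.herm x y hx hy
  have hvb : v.IsHermitian := hf.herm y x hy hx
  have hC := hf.L1 hx hy hp
  rw [← hu, ← hv] at hC
  have hsum : u + v = y := by rw [hu, hv, hf.sumsq hx hy, hxy]
  have h1 : x * (u + v) + (u + v) * x = u + v := by rw [hsum]; exact hxy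
  have hxu : x * u + u * x = u := by
    rw [mul_add, add_mul] at h1
    rw [mul_sub, sub_mul] at hC
    ext i j
    have e1 := congrFun (congrFun h1 i) j
    have e2 := congrFun (congrFun hC i) j
    simp only [Matrix.add_apply, Matrix.sub_apply] at e1 e2 ⊢
    linear_combination (e1 + e2) / 2
  have hfxx : f x x = x := by rw [hf.square hx, hp]
  have hfxu : f x u = u := by rw [hu, hf.assoc x x y hx hx hy, hfxx]
  have hfvx : f v x = v := by rw [hv, ← hf.assoc y x x hy hx hx, hfxx]
  have h4 := hf.sumsq hub hx
  rw [hfxu] at h4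
  have hfux : f u x = u * x + x * u - u := by rw [eq_sub_iff_add_eq, h4]
  have hfxv : f x v = f u x := by rw [hu, hv, hf.assoc x y x hx hy hx]
  calc f x (u - v) - f (u - v) x
      = (f x u - f x v) - (f u x - f v x) := by
        rw [hf.sub_right hx hub hvb, hf.sub_left hub hvb hx]
    _ = (u - (u * x + x * u - u)) - ((u * x + x * u - u) - v) := by
        rw [hfxv, hfux, hfxu, hfvx]
    _ = u + v + (u + u) - ((x * u + u * x) + (x * u + u * x)) := by abel
    _ = u + v + (u + u) - (u + u) := by rw [hxu]
    _ = u + v := by abel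
    _ = y := hsum


section Matrices

variable {n : ℕ}

open Complex in
/-- conjTranspose of a standard basis matrix. -/
theorem stdConj (i j : Fin n) (c : ℂ) :
    (Matrix.single i j c)ᴴ = Matrix.single j i ((starRingEnd ℂ) c) := by
  ext a b
  simp only [conjTranspose_apply, Matrix.single, of_apply, RCLike.star_def]
  by_cases h1 : j = a <;> by_cases h2 : i = b <;> simp [h1, h2, and_comm, map_zero]


variable (n) in
def MA (i0 : Fin n) : Matrix (Fin n) (Fin n) ℂ := Matrix.single i0 i0 1

variable (n) in
def MB (i0 i1 : Fin n) : Matrix (Fin n) (Fin n) ℂ :=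
  Matrix.single i0 i1 1 + Matrix.single i1 i0 1

variable (n) in
def MM (i0 i1 : Fin n) : Matrix (Fin n) (Fin n) ℂ :=
  Matrix.single i0 i1 (-Complex.I) + Matrix.single i1 i0 Complex.I

variable (n) in
def MQ (i0 i1 : Fin n) : Matrix (Fin n) (Fin n) ℂ :=
  Matrix.single i0 i0 1 + Matrix.single i1 i1 1

variable (n) in
def MZ (i0 i1 : Fin n) : Matrix (Fin n) (Fin n) ℂ :=
  Matrix.single i0 i0 1 - Matrix.single i1 i1 1

variable (i0 i1 : Fin n)

theorem herm_MA : (MA n i0).IsHermitian := by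
  rw [Matrix.IsHermitian, MA, stdConj]; simp

theorem herm_MB : (MB n i0 i1).IsHermitian := by
  rw [Matrix.IsHermitian, MB, conjTranspose_add, stdConj, stdConj]; simp [add_comm]

theorem herm_MM : (MM n i0 i1).IsHermitian := by
  rw [Matrix.IsHermitian, MM, conjTranspose_add, stdConj, stdConj]; simp [add_comm]

theorem herm_MQ : (MQ n i0 i1).IsHermitian := by
  rw [Matrix.IsHermitian, MQ, conjTranspose_add, stdConj, stdConj]; simp

theorem herm_MZ : (MZ n i0 i1).IsHermitian := by
  rw [Matrix.IsHermitian, MZ, conjTranspose_sub, stdConj, stdConj]; simp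

theorem prodAA : MA n i0 * MA n i0 = MA n i0 := by
  simp [MA, Matrix.single_mul_single_same]

theorem prodBB (h : i0 ≠ i1) : MB n i0 i1 * MB n i0 i1 = MQ n i0 i1 := by
  simp [MB, MQ, mul_add, add_mul, Matrix.single_mul_single_same,
    Matrix.single_mul_single_of_ne, h, h.symm, add_comm]

theorem prodMM (h : i0 ≠ i1) : MM n i0 i1 * MM n i0 i1 = MQ n i0 i1 := by
  simp [MM, MQ, mul_add, add_mul, Matrix.single_mul_single_same,
    Matrix.single_mul_single_of_ne, h, h.symm, Complex.I_mul_I]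
  exact add_comm _ _

theorem prodQQ (h : i0 ≠ i1) : MQ n i0 i1 * MQ n i0 i1 = MQ n i0 i1 := by
  simp [MQ, mul_add, add_mul, Matrix.single_mul_single_same,
    Matrix.single_mul_single_of_ne, h, h.symm]

theorem prodAQ (h : i0 ≠ i1) : MA n i0 * MQ n i0 i1 = MA n i0 := by
  simp [MA, MQ, mul_add, Matrix.single_mul_single_same,
    Matrix.single_mul_single_of_ne, h, h.symm]

theorem prodQA (h : i0 ≠ i1) : MQ n i0 i1 * MA n i0 = MA n i0 := by
  simp [MA, MQ, add_mul, Matrix.single_mul_single_same,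
    Matrix.single_mul_single_of_ne, h, h.symm]

theorem prodBQ (h : i0 ≠ i1) : MB n i0 i1 * MQ n i0 i1 = MB n i0 i1 := by
  simp [MB, MQ, mul_add, add_mul, Matrix.single_mul_single_same,
    Matrix.single_mul_single_of_ne, h, h.symm]
  exact add_comm _ _

theorem prodQB (h : i0 ≠ i1) : MQ n i0 i1 * MB n i0 i1 = MB n i0 i1 := by
  simp [MB, MQ, mul_add, add_mul, Matrix.single_mul_single_same,
    Matrix.single_mul_single_of_ne, h, h.symm]

theorem prodMQ (h : i0 ≠ i1) : MM n i0 i1 * MQ n i0 i1 = MM n i0 i1 := by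
  simp [MM, MQ, mul_add, add_mul, Matrix.single_mul_single_same,
    Matrix.single_mul_single_of_ne, h, h.symm]
  exact add_comm _ _

theorem prodQM (h : i0 ≠ i1) : MQ n i0 i1 * MM n i0 i1 = MM n i0 i1 := by
  simp [MM, MQ, mul_add, add_mul, Matrix.single_mul_single_same,
    Matrix.single_mul_single_of_ne, h, h.symm]

theorem sumAB (h : i0 ≠ i1) : MA n i0 * MB n i0 i1 + MB n i0 i1 * MA n i0 = MB n i0 i1 := by
  simp [MA, MB, mul_add, add_mul, Matrix.single_mul_single_same,
    Matrix.single_mul_single_of_ne, h, h.symm]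

theorem sumAM (h : i0 ≠ i1) : MA n i0 * MM n i0 i1 + MM n i0 i1 * MA n i0 = MM n i0 i1 := by
  simp [MA, MM, mul_add, add_mul, Matrix.single_mul_single_same,
    Matrix.single_mul_single_of_ne, h, h.symm]

theorem sumBM (h : i0 ≠ i1) : MB n i0 i1 * MM n i0 i1 + MM n i0 i1 * MB n i0 i1 = 0 := by
  simp [MB, MM, mul_add, add_mul, Matrix.single_mul_single_same,
    Matrix.single_mul_single_of_ne, h, h.symm]
  ext a b
  simp [Matrix.single]
  split_ifs <;> ring

theorem zDecomp : MZ n i0 i1 = (2:ℝ) • MA n i0 + (-1:ℝ) • MQ n i0 i1 := by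
  ext a b
  simp [MZ, MA, MQ, Matrix.single]
  split_ifs <;> ring

end Matrices

end NoHermStar


set_option maxHeartbeats 2000000 in
open NoHermStar in
/-- There is no function `⋆ : H_n × H_n → H_n` on `n`-by-`n` Hermitian matrices (`n ≥ 2`)
that is convex-bilinear, satisfies `x⋆y = xy` whenever `xy = yx`, satisfies
`Tr(x⋆y) = Tr(xy)`, and is associative. -/
theorem no_hermitian_star_product (n : ℕ) (hn : 2 ≤ n) :
    ¬ ∃ f : Matrix (Fin n) (Fin n) ℂ → Matrix (Fin n) (Fin n) ℂ → Matrix (Fin n) (Fin n) ℂ,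
      (∀ x y, x.IsHermitian → y.IsHermitian → (f x y).IsHermitian) ∧
      (∀ p : ℝ, 0 ≤ p → p ≤ 1 → ∀ x y z, x.IsHermitian → y.IsHermitian → z.IsHermitian →
        f (p • x + (1 - p) • y) z = p • f x z + (1 - p) • f y z) ∧
      (∀ p : ℝ, 0 ≤ p → p ≤ 1 → ∀ x y z, x.IsHermitian → y.IsHermitian → z.IsHermitian →
        f x (p • y + (1 - p) • z) = p • f x y + (1 - p) • f x z) ∧
      (∀ x y, x.IsHermitian → y.IsHermitian → x * y = y * x → f x y = x * y) ∧
      (∀ x y, x.IsHermitian → y.IsHermitian → (f x y).trace = (x * y).trace) ∧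
      (∀ x y z, x.IsHermitian → y.IsHermitian → z.IsHermitian →
        f x (f y z) = f (f x y) z) := by
  rintro ⟨f, herm, linL, linR, comm, _tr, assoc⟩
  have hf : Good n f := ⟨herm, linL, linR, comm, assoc⟩
  obtain ⟨i0, i1, hne⟩ : ∃ i0 i1 : Fin n, i0 ≠ i1 :=
    ⟨⟨0, by omega⟩, ⟨1, by omega⟩, by simp [Fin.ext_iff]⟩
  set a := MA n i0 with ha_def
  set b := MB n i0 i1 with hb_def
  set m := MM n i0 i1 with hm_def
  set q := MQ n i0 i1 with hq_def
  set z := MZ n i0 i1 with hz_def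
  have hA : a.IsHermitian := herm_MA i0
  have hB : b.IsHermitian := herm_MB i0 i1
  have hM : m.IsHermitian := herm_MM i0 i1
  have hQ : q.IsHermitian := herm_MQ i0 i1
  have hZ : z.IsHermitian := herm_MZ i0 i1
  have haa : a * a = a := prodAA i0
  have hbb : b * b = q := prodBB i0 i1 hne
  have hmm : m * m = q := prodMM i0 i1 hne
  have hsAB : a * b + b * a = b := sumAB i0 i1 hne
  have hsAM : a * m + m * a = m := sumAM i0 i1 hne
  have hsBM : b * m + m * b = 0 := sumBM i0 i1 hne
  -- pair (a, b)
  set u := f a b with hu_def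
  set v := f b a with hv_def
  have hub : u.IsHermitian := herm a b hA hB
  have hvb : v.IsHermitian := herm b a hB hA
  set C := u - v with hC_def
  have hCh : C.IsHermitian := hub.sub hvb
  have S1 : a * C + C * a = C := hf.L1 hA hB haa
  have S2 : b * C + C * b = 0 := hf.L4 hA hB haa hsAB
    (by rw [hbb, prodAQ i0 i1 hne, prodQA i0 i1 hne])
  have hCconj : ∀ i j, star (C i j) = C j i := by
    intro i j
    have e := congrFun (congrFun hCh j) i
    rwa [Matrix.conjTranspose_apply] at e
  have hC00 : C i0 i0 = 0 := by
    have e := congrFun (congrFun S1 i0) i0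
    rw [ha_def, MA] at e
    simp only [Matrix.add_apply, Matrix.single_mul_apply_same,
      Matrix.mul_single_apply_same, one_mul, mul_one] at e
    linear_combination e
  have hCout : ∀ i j, i ≠ i0 → j ≠ i0 → C i j = 0 := by
    intro i j hi hj
    have e := congrFun (congrFun S1 i) j
    rw [ha_def, MA] at e
    simp only [Matrix.add_apply, Matrix.single_mul_apply_of_ne _ _ _ _ _ hi,
      Matrix.mul_single_apply_of_ne _ _ _ _ _ hj, add_zero, zero_add] at e
    linear_combination -e
  have hCrow : ∀ k, k ≠ i0 → k ≠ i1 → C i0 k = 0 := by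
    intro k hk0 hk1
    have e := congrFun (congrFun S2 i1) k
    rw [hb_def, MB, add_mul, mul_add] at e
    simp only [Matrix.add_apply, Matrix.zero_apply,
      Matrix.single_mul_apply_same,
      Matrix.single_mul_apply_of_ne _ _ _ _ _ hne.symm,
      Matrix.mul_single_apply_of_ne _ _ _ _ _ hk1,
      Matrix.mul_single_apply_of_ne _ _ _ _ _ hk0,
      one_mul, add_zero, zero_add] at e
    linear_combination e
  have hCre : C i0 i1 + C i1 i0 = 0 := by
    have e := congrFun (congrFun S2 i0) i0
    rw [hb_def, MB, add_mul, mul_add] at e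
    simp only [Matrix.add_apply, Matrix.zero_apply,
      Matrix.single_mul_apply_same,
      Matrix.single_mul_apply_of_ne _ _ _ _ _ hne,
      Matrix.single_mul_apply_of_ne _ _ _ _ _ hne.symm,
      Matrix.mul_single_apply_same,
      Matrix.mul_single_apply_of_ne _ _ _ _ _ hne,
      Matrix.mul_single_apply_of_ne _ _ _ _ _ hne.symm,
      one_mul, mul_one, add_zero, zero_add] at e
    linear_combination e
  -- the parameter β
  set β : ℝ := (C i0 i1).im with hβ_def
  have hC01 : C i0 i1 = Complex.I * (β : ℝ) := by
    have h1 : C i0 i1 + star (C i0 i1) = 0 := by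
      rw [hCconj i0 i1]; exact hCre
    have hre : (C i0 i1).re = 0 := by
      have := congrArg Complex.re h1; simp at this; linarith
    apply Complex.ext
    · simp [hre]
    · simp [hβ_def]
  have hC10 : C i1 i0 = -(Complex.I * (β : ℝ)) := by
    rw [← hCconj i0 i1, hC01]; simp
  have hCm : C = (-β : ℝ) • m := by
    have hcol : ∀ k, k ≠ i0 → k ≠ i1 → C k i0 = 0 := by
      intro k hk0 hk1
      rw [← hCconj i0 k, hCrow k hk0 hk1, star_zero]
    ext i j
    rw [hm_def, MM]
    simp only [Matrix.smul_apply, Matrix.add_apply]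
    by_cases hi : i = i0
    · by_cases hj : j = i0
      · rw [hi, hj, hC00]; simp [hne, hne.symm]
      · by_cases hj1 : j = i1
        · rw [hi, hj1, hC01]
          simp only [Matrix.single_apply_same,
            Matrix.single_apply_of_row_ne hne.symm, add_zero,
            Complex.real_smul]
          push_cast
          ring
        · rw [hi, hCrow j (fun hh => hj (hi ▸ hh)) hj1]
          simp [Ne.symm hj, Ne.symm hj1]
    · by_cases hj : j = i0
      · by_cases hi1 : i = i1
        · rw [hj, hi1, hC10]
          simp only [Matrix.single_apply_same,
            Matrix.single_apply_of_row_ne hne, zero_add,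
            Complex.real_smul]
          push_cast
          ring
        · rw [hj, hcol i hi hi1]
          simp [Ne.symm hi, Ne.symm hi1]
      · rw [hCout i j hi hj]
        simp [Ne.symm hi, Ne.symm hj]
  -- pair (a, m)
  set u2 := f a m with hu2_def
  set v2 := f m a with hv2_def
  have hu2b : u2.IsHermitian := herm a m hA hM
  have hv2b : v2.IsHermitian := herm m a hM hA
  set D := u2 - v2 with hD_def
  have hDh : D.IsHermitian := hu2b.sub hv2b
  have S3 : a * D + D * a = D := hf.L1 hA hM haa
  have S4 : m * D + D * m = 0 := hf.L4 hA hM haa hsAM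
    (by rw [hmm, prodAQ i0 i1 hne, prodQA i0 i1 hne])
  have hDconj : ∀ i j, star (D i j) = D j i := by
    intro i j
    have e := congrFun (congrFun hDh j) i
    rwa [Matrix.conjTranspose_apply] at e
  have hD00 : D i0 i0 = 0 := by
    have e := congrFun (congrFun S3 i0) i0
    rw [ha_def, MA] at e
    simp only [Matrix.add_apply, Matrix.single_mul_apply_same,
      Matrix.mul_single_apply_same, one_mul, mul_one] at e
    linear_combination e
  have hDout : ∀ i j, i ≠ i0 → j ≠ i0 → D i j = 0 := by
    intro i j hi hj
    have e := congrFun (congrFun S3 i) j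
    rw [ha_def, MA] at e
    simp only [Matrix.add_apply, Matrix.single_mul_apply_of_ne _ _ _ _ _ hi,
      Matrix.mul_single_apply_of_ne _ _ _ _ _ hj, add_zero, zero_add] at e
    linear_combination -e
  have hDrow : ∀ k, k ≠ i0 → k ≠ i1 → D i0 k = 0 := by
    intro k hk0 hk1
    have e := congrFun (congrFun S4 i1) k
    rw [hm_def, MM, add_mul, mul_add] at e
    simp only [Matrix.add_apply, Matrix.zero_apply,
      Matrix.single_mul_apply_same,
      Matrix.single_mul_apply_of_ne _ _ _ _ _ hne.symm,
      Matrix.mul_single_apply_of_ne _ _ _ _ _ hk1,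
      Matrix.mul_single_apply_of_ne _ _ _ _ _ hk0,
      add_zero, zero_add] at e
    rcases mul_eq_zero.mp e with h | h
    · exact absurd h Complex.I_ne_zero
    · exact h
  have hDdiag : D i0 i1 - star (D i0 i1) = 0 := by
    have e := congrFun (congrFun S4 i0) i0
    rw [hm_def, MM, add_mul, mul_add] at e
    simp only [Matrix.add_apply, Matrix.zero_apply,
      Matrix.single_mul_apply_same,
      Matrix.single_mul_apply_of_ne _ _ _ _ _ hne,
      Matrix.single_mul_apply_of_ne _ _ _ _ _ hne.symm,
      Matrix.mul_single_apply_same,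
      Matrix.mul_single_apply_of_ne _ _ _ _ _ hne,
      Matrix.mul_single_apply_of_ne _ _ _ _ _ hne.symm,
      add_zero, zero_add] at e
    rw [← hDconj i0 i1] at e
    linear_combination (-Complex.I) * e
      + (D i0 i1 - star (D i0 i1)) * Complex.I_mul_I
  set ρ : ℝ := (D i0 i1).re with hρ_def
  have hD01 : D i0 i1 = (ρ : ℝ) := by
    have him : (D i0 i1).im = 0 := by
      have := congrArg Complex.im hDdiag
      simp at this
      linarith
    apply Complex.ext
    · simp [hρ_def]
    · simp [him]
  have hD10 : D i1 i0 = (ρ : ℝ) := by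
    rw [← hDconj i0 i1, hD01]; simp
  have hDb : D = (ρ : ℝ) • b := by
    have hcol : ∀ k, k ≠ i0 → k ≠ i1 → D k i0 = 0 := by
      intro k hk0 hk1
      rw [← hDconj i0 k, hDrow k hk0 hk1, star_zero]
    ext i j
    rw [hb_def, MB]
    simp only [Matrix.smul_apply, Matrix.add_apply]
    by_cases hi : i = i0
    · by_cases hj : j = i0
      · rw [hi, hj, hD00]; simp [hne, hne.symm]
      · by_cases hj1 : j = i1
        · rw [hi, hj1, hD01]
          simp [hne, hne.symm, Complex.real_smul]
        · rw [hi, hDrow j (fun hh => hj (hi ▸ hh)) hj1]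
          simp [Ne.symm hj, Ne.symm hj1]
    · by_cases hj : j = i0
      · by_cases hi1 : i = i1
        · rw [hj, hi1, hD10]
          simp [hne, hne.symm, Complex.real_smul]
        · rw [hj, hcol i hi hi1]
          simp [Ne.symm hi, Ne.symm hi1]
      · rw [hDout i j hi hj]
        simp [Ne.symm hi, Ne.symm hj]
  -- the projections p1 = (q+b)/2, p2 = (q+m)/2
  set p1 := (2⁻¹:ℝ) • q + (2⁻¹:ℝ) • b with hp1_def
  set p2 := (2⁻¹:ℝ) • q + (2⁻¹:ℝ) • m with hp2_def
  have hP1 : p1.IsHermitian := (hermSmul _ hQ).add (hermSmul _ hB)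
  have hP2 : p2.IsHermitian := (hermSmul _ hQ).add (hermSmul _ hM)
  have hqq : q * q = q := prodQQ i0 i1 hne
  have hqb : q * b = b := prodQB i0 i1 hne
  have hbq : b * q = b := prodBQ i0 i1 hne
  have hqm : q * m = m := prodQM i0 i1 hne
  have hmq : m * q = m := prodMQ i0 i1 hne
  have hp1sq : p1 * p1 = p1 := by
    rw [hp1_def]
    simp only [add_mul, mul_add, smul_mul_assoc, mul_smul_comm, hqq, hqb, hbq, hbb]
    module
  have hp2sq : p2 * p2 = p2 := by
    rw [hp2_def]
    simp only [add_mul, mul_add, smul_mul_assoc, mul_smul_comm, hqq, hqm, hmq, hmm]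
    module
  -- W and its quarter
  set W := f b m - f m b with hW_def
  have hWh : W.IsHermitian := (herm b m hB hM).sub (herm m b hM hB)
  have hbm0 : f b m + f m b = 0 := by rw [hf.sumsq hB hM, hsBM]
  have hfqp2 : f q p2 = p2 := by
    have h1 : q * p2 = p2 := by
      rw [hp2_def]
      simp only [mul_add, mul_smul_comm, hqq, hqm]
    have h2 : p2 * q = p2 := by
      rw [hp2_def]
      simp only [add_mul, smul_mul_assoc, hqq, hmq]
    rw [comm q p2 hQ hP2 (by rw [h1, h2]), h1]
  have hfqp1 : f q p1 = p1 := by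
    have h1 : q * p1 = p1 := by
      rw [hp1_def]
      simp only [mul_add, mul_smul_comm, hqq, hqb]
    have h2 : p1 * q = p1 := by
      rw [hp1_def]
      simp only [add_mul, smul_mul_assoc, hqq, hbq]
    rw [comm q p1 hQ hP1 (by rw [h1, h2]), h1]
  have hfbq : f b q = b := by
    rw [comm b q hB hQ (by rw [hbq, hqb]), hbq]
  have hfmq : f m q = m := by
    rw [comm m q hM hQ (by rw [hmq, hqm]), hmq]
  have hfp1p2 : f p1 p2 = (2⁻¹:ℝ) • p2 + ((2⁻¹:ℝ) • ((2⁻¹:ℝ) • b + (2⁻¹:ℝ) • f b m)) := by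
    rw [hp1_def, hf.add_left (hermSmul _ hQ) (hermSmul _ hB) hP2,
      hf.smul_left _ hQ hP2, hf.smul_left _ hB hP2, hfqp2]
    congr 1
    rw [hp2_def, hf.add_right hB (hermSmul _ hQ) (hermSmul _ hM),
      hf.smul_right _ hB hQ, hf.smul_right _ hB hM, hfbq]
  have hfp2p1 : f p2 p1 = (2⁻¹:ℝ) • p1 + ((2⁻¹:ℝ) • ((2⁻¹:ℝ) • m + (2⁻¹:ℝ) • f m b)) := by
    rw [hp2_def, hf.add_left (hermSmul _ hQ) (hermSmul _ hM) hP1,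
      hf.smul_left _ hQ hP1, hf.smul_left _ hM hP1, hfqp1]
    congr 1
    rw [hp1_def, hf.add_right hM (hermSmul _ hQ) (hermSmul _ hB),
      hf.smul_right _ hM hQ, hf.smul_right _ hM hB, hfmq]
  have hW4 : f p1 p2 - f p2 p1 = (4⁻¹:ℝ) • W := by
    rw [hfp1p2, hfp2p1, hW_def, hp1_def, hp2_def]
    module
  have hL1p : p1 * (f p1 p2 - f p2 p1) + (f p1 p2 - f p2 p1) * p1 = f p1 p2 - f p2 p1 :=
    hf.L1 hP1 hP2 hp1sq
  have hL1p' : p2 * (f p2 p1 - f p1 p2) + (f p2 p1 - f p1 p2) * p2 = f p2 p1 - f p1 p2 :=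
    hf.L1 hP2 hP1 hp2sq
  rw [hW4] at hL1p
  have hW4' : f p2 p1 - f p1 p2 = (-(4⁻¹:ℝ)) • W := by
    rw [← neg_sub, hW4, neg_smul]
  rw [hW4'] at hL1p'
  have S5 : q * W + W * q + (b * W + W * b) = W + W := by
    have h2 : (8⁻¹:ℝ) • (q * W + W * q + (b * W + W * b)) = (4⁻¹:ℝ) • W := by
      rw [← hL1p, hp1_def]
      simp only [add_mul, mul_add, smul_mul_assoc, mul_smul_comm]
      module
    ext i j
    have e := congrFun (congrFun h2 i) j
    simp only [Matrix.smul_apply, Matrix.add_apply, Complex.real_smul] at e ⊢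
    push_cast at e
    linear_combination (8:ℂ) * e
  have S6 : q * W + W * q + (m * W + W * m) = W + W := by
    have h2 : (8⁻¹:ℝ) • (q * W + W * q + (m * W + W * m)) = (4⁻¹:ℝ) • W := by
      have h3 : -((-(4⁻¹:ℝ)) • W) = (4⁻¹:ℝ) • W := by module
      rw [← h3, ← hL1p', hp2_def]
      simp only [add_mul, mul_add, smul_mul_assoc, mul_smul_comm, neg_smul, smul_neg,
        mul_neg, neg_mul]
      module
    ext i j
    have e := congrFun (congrFun h2 i) j
    simp only [Matrix.smul_apply, Matrix.add_apply, Complex.real_smul] at e ⊢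
    push_cast at e
    linear_combination (8:ℂ) * e
  have hWconj : ∀ i j, star (W i j) = W j i := by
    intro i j
    have e := congrFun (congrFun hWh j) i
    rwa [Matrix.conjTranspose_apply] at e
  have S5e := S5
  have S6e := S6
  rw [hq_def, MQ, hb_def, MB] at S5e
  rw [hq_def, MQ, hm_def, MM] at S6e
  simp only [add_mul, mul_add] at S5e S6e
  have onePlusI : (1:ℂ) + Complex.I ≠ 0 := by
    intro hh
    have := congrArg Complex.im hh
    simp at this
  have hWrows : ∀ k, k ≠ i0 → k ≠ i1 → W i0 k = 0 ∧ W i1 k = 0 := by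
    intro k hk0 hk1
    have e5 := congrFun (congrFun S5e i0) k
    have e6 := congrFun (congrFun S6e i0) k
    simp only [Matrix.add_apply, Matrix.single_mul_apply_same,
      Matrix.single_mul_apply_of_ne _ _ _ _ _ hne,
      Matrix.single_mul_apply_of_ne _ _ _ _ _ hne.symm,
      Matrix.mul_single_apply_of_ne _ _ _ _ _ hk0,
      Matrix.mul_single_apply_of_ne _ _ _ _ _ hk1,
      one_mul, add_zero, zero_add] at e5 e6
    have h1 : W i1 k = W i0 k := by linear_combination e5
    have h2 : ((1:ℂ) + Complex.I) * W i1 k = 0 := by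
      linear_combination e5 - e6
    rcases mul_eq_zero.mp h2 with h | h
    · exact absurd h onePlusI
    · rw [h] at h1
      exact ⟨h1.symm, h⟩
  have hW0110 : W i0 i1 = 0 ∧ W i1 i0 = 0 := by
    have e5 := congrFun (congrFun S5e i0) i0
    have e6 := congrFun (congrFun S6e i0) i0
    simp only [Matrix.add_apply, Matrix.single_mul_apply_same,
      Matrix.single_mul_apply_of_ne _ _ _ _ _ hne,
      Matrix.single_mul_apply_of_ne _ _ _ _ _ hne.symm,
      Matrix.mul_single_apply_same,
      Matrix.mul_single_apply_of_ne _ _ _ _ _ hne,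
      Matrix.mul_single_apply_of_ne _ _ _ _ _ hne.symm,
      one_mul, mul_one, add_zero, zero_add] at e5 e6
    -- e5 : W10 + W01 = 0 modulo arrangement, e6 : -I*W10 + W01*I = 0 modulo arrangement
    have h1 : W i1 i0 + W i0 i1 = 0 := by linear_combination e5
    have h2 : ((1:ℂ) + Complex.I) * (Complex.I * (W i0 i1 - W i1 i0)) = 0 := by
      linear_combination (1 + Complex.I) * e6
    rcases mul_eq_zero.mp h2 with h | h
    · exact absurd h onePlusI
    · rcases mul_eq_zero.mp h with h' | h'
      · exact absurd h' Complex.I_ne_zero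
      · constructor
        · linear_combination (h1 + h') / 2
        · linear_combination (h1 - h') / 2
  have hW11 : W i1 i1 = -(W i0 i0) := by
    have e5 := congrFun (congrFun S5e i0) i1
    simp only [Matrix.add_apply, Matrix.single_mul_apply_same,
      Matrix.single_mul_apply_of_ne _ _ _ _ _ hne,
      Matrix.single_mul_apply_of_ne _ _ _ _ _ hne.symm,
      Matrix.mul_single_apply_same,
      Matrix.mul_single_apply_of_ne _ _ _ _ _ hne,
      Matrix.mul_single_apply_of_ne _ _ _ _ _ hne.symm,
      one_mul, mul_one, add_zero, zero_add] at e5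
    linear_combination e5
  set δ : ℝ := (W i0 i0).re with hδ_def
  have hW00 : W i0 i0 = (δ : ℝ) := by
    have him : (W i0 i0).im = 0 := by
      have hh := hWconj i0 i0
      have := congrArg Complex.im hh
      simp at this
      linarith
    apply Complex.ext
    · simp [hδ_def]
    · simp [him]
  have hWz : W = (δ : ℝ) • z := by
    ext i j
    rw [hz_def, MZ]
    simp only [Matrix.smul_apply, Matrix.sub_apply]
    by_cases hi : i = i0
    · by_cases hj : j = i0
      · rw [hi, hj, hW00]; simp [hne, hne.symm, Complex.real_smul]
      · by_cases hj1 : j = i1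
        · rw [hi, hj1, hW0110.1]; simp [hne, hne.symm]
        · rw [hi, (hWrows j (fun hh => hj (hi ▸ hh)) hj1).1]
          simp [Ne.symm hj, Ne.symm hj1]
    · by_cases hi1 : i = i1
      · by_cases hj : j = i0
        · rw [hi1, hj, hW0110.2]; simp [hne, hne.symm]
        · by_cases hj1 : j = i1
          · rw [hi1, hj1, hW11, hW00]
            simp [hne, hne.symm, Complex.real_smul]
          · rw [hi1, (hWrows j (fun hh => hj hh) hj1).2]
            simp [Ne.symm hj, Ne.symm hj1]
      · by_cases hj : j = i0
        · rw [hj, ← hWconj i0 i, (hWrows i hi hi1).1, star_zero]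
          simp [Ne.symm hi, Ne.symm hi1]
        · by_cases hj1 : j = i1
          · rw [hj1, ← hWconj i1 i, (hWrows i hi hi1).2, star_zero]
            simp [Ne.symm hi, Ne.symm hi1]
          · rw [← hWconj j i]
            have e5 := congrFun (congrFun S5e j) i
            simp only [Matrix.add_apply,
              Matrix.single_mul_apply_of_ne _ _ _ _ _ hj,
              Matrix.single_mul_apply_of_ne _ _ _ _ _ hj1,
              Matrix.mul_single_apply_of_ne _ _ _ _ _ hi,
              Matrix.mul_single_apply_of_ne _ _ _ _ _ hi1,
              add_zero, zero_add] at e5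
            have : W j i = 0 := by linear_combination -e5 / 2
            rw [this, star_zero]
            simp [Ne.symm hi, Ne.symm hi1]
  -- values of f b m and f m b
  have hWe : f b m - f m b = (δ : ℝ) • z := by rw [← hW_def]; exact hWz
  have hfbm : f b m = ((2⁻¹ * δ : ℝ)) • z := by
    ext i j
    have e1 := congrFun (congrFun hbm0 i) j
    have e2 := congrFun (congrFun hWe i) j
    simp only [Matrix.add_apply, Matrix.sub_apply, Matrix.zero_apply, Matrix.smul_apply,
      Complex.real_smul] at e1 e2 ⊢
    push_cast
    linear_combination (e1 + e2) / 2
  have hfmb : f m b = ((-(2⁻¹ * δ) : ℝ)) • z := by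
    ext i j
    have e1 := congrFun (congrFun hbm0 i) j
    have e2 := congrFun (congrFun hWe i) j
    simp only [Matrix.add_apply, Matrix.sub_apply, Matrix.zero_apply, Matrix.smul_apply,
      Complex.real_smul] at e1 e2 ⊢
    push_cast
    linear_combination (e1 - e2) / 2
  -- f a z = a
  have hfaq : f a q = a := by
    rw [comm a q hA hQ (by rw [prodAQ i0 i1 hne, prodQA i0 i1 hne])]
    exact prodAQ i0 i1 hne
  have hfaa : f a a = a := by rw [hf.square hA, haa]
  have hfaz : f a z = a := by
    have hzd : z = (2:ℝ) • a + (-1:ℝ) • q := by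
      rw [hz_def, ha_def, hq_def]; exact zDecomp i0 i1
    rw [hzd, hf.add_right hA (hermSmul _ hA) (hermSmul _ hQ),
      hf.smul_right _ hA hA, hf.smul_right _ hA hQ, hfaa, hfaq]
    module
  -- halves
  have husum : u + v = b := by rw [hu_def, hv_def, hf.sumsq hA hB, hsAB]
  have hu_half : u = (2⁻¹:ℝ) • (b + C) := by
    rw [hC_def]
    ext i j
    have e1 := congrFun (congrFun husum i) j
    simp only [Matrix.add_apply, Matrix.sub_apply, Matrix.smul_apply,
      Complex.real_smul] at e1 ⊢
    push_cast
    linear_combination e1 / 2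
  have hu2sum : u2 + v2 = m := by rw [hu2_def, hv2_def, hf.sumsq hA hM, hsAM]
  have hu2_half : u2 = (2⁻¹:ℝ) • (m + D) := by
    rw [hD_def]
    ext i j
    have e1 := congrFun (congrFun hu2sum i) j
    simp only [Matrix.add_apply, Matrix.sub_apply, Matrix.smul_apply,
      Complex.real_smul] at e1 ⊢
    push_cast
    linear_combination e1 / 2
  -- relation (A) : assoc a b m
  have EA := hf.assoc a b m hA hB hM
  rw [hfbm, hf.smul_right _ hA hZ, hfaz, ← hu_def, hu_half,
    hf.smul_left _ (hB.add hCh) hM, hf.add_left hB hCh hM, hfbm, hCm,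
    hf.smul_left _ hM hM, hf.square hM, hmm] at EA
  have rA : δ / 2 + β = 0 := by
    have e := congrFun (congrFun EA i1) i1
    rw [ha_def, hz_def, hq_def] at e
    simp only [MA, MZ, MQ, Matrix.smul_apply, Matrix.add_apply, Matrix.sub_apply,
      Matrix.single_apply_same,
      Matrix.single_apply_of_row_ne hne,
      Matrix.single_apply_of_row_ne hne.symm,
      Complex.real_smul] at e
    have e' : ((0:ℝ) : ℂ) = ((2⁻¹ * ((2⁻¹ * δ) * (-1) + -β) : ℝ) : ℂ) := by
      push_cast
      push_cast at e
      linear_combination e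
    have := Complex.ofReal_injective e'
    linarith
  -- relation (B) : assoc a m b
  have EB := hf.assoc a m b hA hM hB
  rw [hfmb, hf.smul_right _ hA hZ, hfaz, ← hu2_def, hu2_half,
    hf.smul_left _ (hM.add hDh) hB, hf.add_left hM hDh hB, hfmb, hDb,
    hf.smul_left _ hB hB, hf.square hB, hbb] at EB
  have rB : δ / 2 + ρ = 0 := by
    have e := congrFun (congrFun EB i1) i1
    rw [ha_def, hz_def, hq_def] at e
    simp only [MA, MZ, MQ, Matrix.smul_apply, Matrix.add_apply, Matrix.sub_apply,
      Matrix.single_apply_same,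
      Matrix.single_apply_of_row_ne hne,
      Matrix.single_apply_of_row_ne hne.symm,
      Complex.real_smul] at e
    have e' : ((0:ℝ) : ℂ) = ((2⁻¹ * ((-(2⁻¹ * δ)) * (-1) + ρ) : ℝ) : ℂ) := by
      push_cast
      push_cast at e
      linear_combination e
    have := Complex.ofReal_injective e'
    linarith
  -- relation (C) : L3 for the pair (a, m)
  have EC := hf.L3 hA hM haa hsAM
  rw [← hu2_def, ← hv2_def, ← hD_def, hDb, hf.smul_right _ hA hB,
    hf.smul_left _ hB hA, ← hu_def, ← hv_def] at EC
  have rC : ρ * β = -1 := by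
    have e := congrFun (congrFun EC i0) i1
    rw [hm_def] at e
    simp only [MM, Matrix.smul_apply, Matrix.add_apply, Matrix.sub_apply,
      Matrix.single_apply_same,
      Matrix.single_apply_of_row_ne hne,
      Matrix.single_apply_of_row_ne hne.symm,
      Complex.real_smul, add_zero, zero_add] at e
    have hCe : u i0 i1 - v i0 i1 = Complex.I * (β : ℝ) := by
      rw [← Matrix.sub_apply]
      exact hC01
    have h : Complex.I * ((ρ:ℂ) * (β:ℂ) + 1) = 0 := by
      linear_combination e - (ρ:ℂ) * hCe
    rcases mul_eq_zero.mp h with h' | h'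
    · exact absurd h' Complex.I_ne_zero
    · have : ((ρ * β + 1 : ℝ) : ℂ) = 0 := by push_cast; linear_combination h'
      have := Complex.ofReal_eq_zero.mp this
      linarith
  -- contradiction
  have hβρ : β = ρ := by linarith
  rw [hβρ] at rC
  nlinarith [sq_nonneg ρ]
end

section
/- The only functions ⋆ : M_n × M_n → M_n (n ≥ 2) that are convex-bilinear, satisfy x⋆y = xy on commuting pairs, satisfy Tr(x⋆y) = Tr(xy), and are associative, are x⋆y = xy and x⋆y = yx. -/
open Matrix

namespace StarProdAux

variable {n : ℕ}

abbrev Mat (n : ℕ) := Matrix (Fin n) (Fin n) ℂ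

/-- `E i j` is the matrix unit. -/
noncomputable abbrev E (i j : Fin n) : Mat n := Matrix.single i j (1:ℂ)

lemma E_mul_E (i j k : Fin n) : E i j * E j k = E i k := by
  rw [single_mul_single_same, mul_one]

lemma E_mul_E_ne {j k : Fin n} (h : j ≠ k) (i l : Fin n) : E i j * E k l = 0 :=
  single_mul_single_of_ne _ _ _ _ h _

lemma smul_E (i j : Fin n) (c : ℂ) : Matrix.single i j c = c • E i j := by
  rw [smul_single, smul_eq_mul, mul_one]

lemma trace_E_diag (i : Fin n) : (E i i).trace = 1 := by
  rw [Matrix.trace]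
  simp [Matrix.diag, Matrix.single, Matrix.of_apply]

/-- `Eii * M * Ejj = M i j • E i j`. -/
lemma E_sandwich (i j : Fin n) (M : Mat n) : E i i * M * E j j = M i j • E i j := by
  show Matrix.single i i 1 * M * Matrix.single j j 1 = M i j • Matrix.single i j 1
  ext p q
  rcases eq_or_ne q j with rfl | hq
  · rcases eq_or_ne p i with rfl | hp
    · simp
    · simp only [mul_single_apply_same, Matrix.smul_apply, smul_eq_mul]
      rw [single_mul_apply_of_ne (h := hp),
        single_apply_of_ne i q 1 p q (by tauto)]
      ring
  · rw [Matrix.smul_apply, mul_single_apply_of_ne (hbj := hq),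
      single_apply_of_ne i j 1 p q (by tauto)]
    simp

/-- The derived data of a star product: `h x y = f x y - x * y`. -/
structure GoodH (n : ℕ) where
  h : Mat n → Mat n → Mat n
  add₁ : ∀ x y z, h (x + y) z = h x z + h y z
  add₂ : ∀ x y z, h x (y + z) = h x y + h x z
  smul₁ : ∀ (c : ℂ) x y, h (c • x) y = c • h x y
  smul₂ : ∀ (c : ℂ) x y, h x (c • y) = c • h x y
  comm : ∀ x y, x * y = y * x → h x y = 0
  anti : ∀ x y, h x y = - h y x
  tr : ∀ x y, (h x y).trace = 0
  assoc : ∀ x y z,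
    x * h y z + h x (y * z) + h x (h y z) = h x y * z + h (x * y) z + h (h x y) z

namespace GoodH

variable (G : GoodH n)

lemma zero₁ (y : Mat n) : G.h 0 y = 0 := by
  have := G.smul₁ 0 0 y
  simpa using this

lemma zero₂ (x : Mat n) : G.h x 0 = 0 := by
  have := G.smul₂ 0 x 0
  simpa using this

lemma refl_zero (x : Mat n) : G.h x x = 0 := G.comm x x rfl

lemma neg₂ (x y : Mat n) : G.h x (-y) = - G.h x y := by
  have := G.smul₂ (-1) x y
  simpa using this

lemma sub₂ (x y z : Mat n) : G.h x (y - z) = G.h x y - G.h x z := by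
  rw [sub_eq_add_neg, G.add₂, G.neg₂, sub_eq_add_neg]

lemma anti' (x y : Mat n) : G.h y x = - G.h x y := by rw [G.anti x y, neg_neg]

end GoodH

namespace GoodH

variable (G : GoodH n)

lemma neg₁ (x y : Mat n) : G.h (-x) y = - G.h x y := by
  have := G.smul₁ (-1) x y
  simpa using this

lemma sub₁ (x y z : Mat n) : G.h (x - y) z = G.h x z - G.h y z := by
  rw [sub_eq_add_neg, G.add₁, G.neg₁, sub_eq_add_neg]

/-- disjoint matrix units commute. -/
lemma hEE_disj {i j k l : Fin n} (hjk : j ≠ k) (hli : l ≠ i) :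
    G.h (E i j) (E k l) = 0 :=
  G.comm _ _ (by rw [E_mul_E_ne hjk, E_mul_E_ne hli])

lemma hdiag (i k : Fin n) : G.h (E i i) (E k k) = 0 := by
  rcases eq_or_ne i k with rfl | h
  · exact G.refl_zero _
  · exact G.hEE_disj h h.symm

/-- `E i i + E j j` commutes with `E i j`. -/
lemma hsum_od {i j : Fin n} (hij : i ≠ j) :
    G.h (E j j) (E i j) = - G.h (E i i) (E i j) := by
  have hc : G.h (E i i + E j j) (E i j) = 0 := by
    refine G.comm _ _ ?_
    rw [add_mul, mul_add, E_mul_E, E_mul_E_ne hij.symm, E_mul_E, E_mul_E_ne hij.symm]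
    abel
  rw [G.add₁] at hc
  linear_combination (norm := abel) hc

lemma hsum_od' {i j : Fin n} (hij : i ≠ j) :
    G.h (E i i) (E j i) = - G.h (E j j) (E j i) := by
  have hc : G.h (E j j + E i i) (E j i) = 0 := by
    refine G.comm _ _ ?_
    rw [add_mul, mul_add, E_mul_E, E_mul_E_ne hij, E_mul_E, E_mul_E_ne hij]
    abel
  rw [G.add₁] at hc
  linear_combination (norm := abel) hc

lemma hEkk {i j k : Fin n} (hki : k ≠ i) (hjk : j ≠ k) :
    G.h (E k k) (E i j) = 0 :=
  G.hEE_disj hki hjk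

/-- Peirce decomposition of `a := h (E i i) (E i j)`. -/
lemma peirce {i j : Fin n} (hij : i ≠ j) :
    G.h (E i i) (E i j)
      = (G.h (E i i) (E i j) i j) • E i j + (G.h (E i i) (E i j) j i) • E j i := by
  set a := G.h (E i i) (E i j) with ha
  -- r1 : Eii * a + h Eii a = 0
  have r1 : E i i * a + G.h (E i i) a = 0 := by
    have A := G.assoc (E i i) (E i i) (E i j)
    rw [G.hdiag i i, E_mul_E, E_mul_E, G.zero₁, zero_mul, ← ha] at A
    linear_combination (norm := abel) A
  -- r3 : a = a * Eii + h a Eii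
  have r3 : a = a * E i i + G.h a (E i i) := by
    have A := G.assoc (E i j) (E i i) (E i i)
    rw [G.hdiag i i, E_mul_E, E_mul_E_ne hij.symm, mul_zero, G.zero₂, G.zero₁,
      G.anti' (E i i) (E i j), ← ha, neg_mul, G.neg₁] at A
    linear_combination (norm := abel) -A
  have p1 : a = a * E i i + E i i * a := by
    have e1 : G.h a (E i i) = E i i * a := by
      rw [G.anti a (E i i)]
      linear_combination (norm := abel) -r1
    rw [e1] at r3; exact r3
  -- with j
  have haj : G.h (E j j) (E i j) = -a := by rw [G.hsum_od hij, ha]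
  have r1j : E j j * a + G.h (E j j) a = a := by
    have A := G.assoc (E j j) (E j j) (E i j)
    rw [G.hdiag j j, E_mul_E, E_mul_E_ne hij.symm, G.zero₂, G.zero₁, zero_mul, haj,
      G.neg₂, mul_neg] at A
    linear_combination (norm := abel) -A
  have r3j : (0:Mat n) = a * E j j + G.h a (E j j) := by
    have A := G.assoc (E i j) (E j j) (E j j)
    have hij' : G.h (E i j) (E j j) = a := by
      rw [G.anti (E i j) (E j j), haj, neg_neg]
    rw [G.hdiag j j, E_mul_E, E_mul_E, G.zero₂, hij', mul_zero] at A
    linear_combination (norm := abel) A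
  have p2 : a = E j j * a + a * E j j := by
    have e1 : G.h (E j j) a = a * E j j := by
      rw [G.anti (E j j) a]
      linear_combination (norm := abel) r3j
    rw [e1] at r1j
    exact r1j.symm
  -- combine
  have q1 : E j j * a = E j j * a * E i i := by
    calc E j j * a = E j j * (a * E i i + E i i * a) := by rw [← p1]
    _ = E j j * a * E i i + (E j j * E i i) * a := by noncomm_ring
    _ = E j j * a * E i i := by rw [E_mul_E_ne hij.symm]; noncomm_ring
  have q2 : a * E j j = E i i * a * E j j := by
    calc a * E j j = (a * E i i + E i i * a) * E j j := by rw [← p1]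
    _ = a * (E i i * E j j) + E i i * a * E j j := by noncomm_ring
    _ = E i i * a * E j j := by rw [E_mul_E_ne hij]; noncomm_ring
  have p3 : a = E j j * a * E i i + E i i * a * E j j := by
    conv_lhs => rw [p2, q1, q2]
  rw [E_sandwich j i a, E_sandwich i j a] at p3
  exact p3.trans (add_comm _ _)

end GoodH

lemma trace_mul_E (M : Mat n) (i j : Fin n) : (M * E i j).trace = M j i := by
  rw [Matrix.trace]
  rw [show Matrix.diag (M * E i j) = fun p => (M * E i j) p p from rfl]
  rw [Finset.sum_eq_single j]
  · rw [mul_single_apply_same, mul_one]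
  · intro b _ hb
    rw [mul_single_apply_of_ne (hbj := hb)]
  · intro hj; exact absurd (Finset.mem_univ j) hj

lemma E_mul_apply (i j p q : Fin n) (A : Mat n) :
    (E i j * A) p q = if p = i then A j q else 0 := by
  split
  · next hp => subst hp; rw [single_mul_apply_same, one_mul]
  · next hp => rw [single_mul_apply_of_ne (h := hp)]

lemma mul_E_apply (i j p q : Fin n) (A : Mat n) :
    (A * E i j) p q = if q = j then A p i else 0 := by
  split
  · next hq => subst hq; rw [mul_single_apply_same, mul_one]
  · next hq => rw [mul_single_apply_of_ne (hbj := hq)]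

lemma E_apply (i j p q : Fin n) : (E i j : Mat n) p q = if p = i ∧ q = j then 1 else 0 := by
  by_cases h : p = i ∧ q = j
  · obtain ⟨rfl, rfl⟩ := h; rw [if_pos ⟨rfl, rfl⟩]; exact single_apply_same ..
  · rw [if_neg h]; exact single_apply_of_ne _ _ _ _ _ (by tauto)

namespace GoodH

variable (G : GoodH n)

/-- `α i j` : the coefficient of `h (E i i) (E i j)` on `E i j`. -/
noncomputable def al (i j : Fin n) : ℂ := G.h (E i i) (E i j) i j

/-- `γ i j` : the coefficient of `h (E i j) (E j i)` on `E i i - E j j`. -/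
noncomputable def ga (i j : Fin n) : ℂ := G.h (E i j) (E j i) i i

lemma beta_zero {i j : Fin n} (hij : i ≠ j) : G.h (E i i) (E i j) j i = 0 := by
  have A := G.assoc (E i i) (E i j) (E i j)
  rw [E_mul_E i i j, E_mul_E_ne hij.symm i j] at A
  rw [G.refl_zero (E i j)] at A
  rw [G.zero₂, mul_zero] at A
  have T := congrArg Matrix.trace A
  simp only [Matrix.trace_add, Matrix.trace_zero, G.tr, trace_mul_E, add_zero, zero_add] at T
  exact T.symm

lemma a_eq {i j : Fin n} (hij : i ≠ j) :
    G.h (E i i) (E i j) = G.al i j • E i j := by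
  rw [G.peirce hij, G.beta_zero hij, zero_smul, add_zero, al]

lemma t1 {i j : Fin n} (hij : i ≠ j) :
    G.h (E j j) (E i j) = -(G.al i j) • E i j := by
  rw [G.hsum_od hij, G.a_eq hij, neg_smul]

lemma t2 {i j : Fin n} (hij : i ≠ j) :
    G.h (E i j) (E j j) = G.al i j • E i j := by
  rw [G.anti' (E j j) (E i j), G.t1 hij, neg_smul, neg_neg]

lemma t3 {i j : Fin n} (hij : i ≠ j) :
    G.h (E i j) (E i i) = -(G.al i j) • E i j := by
  rw [G.anti' (E i i) (E i j), G.a_eq hij, neg_smul]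

lemma t4 {i j : Fin n} (hij : i ≠ j) :
    G.h (E i i) (E j i) = -(G.al j i) • E j i := by
  rw [G.hsum_od' hij, G.a_eq hij.symm, neg_smul]

lemma t5 {i j : Fin n} (hij : i ≠ j) :
    G.h (E j i) (E i i) = G.al j i • E j i := by
  rw [G.anti' (E i i) (E j i), G.t4 hij, neg_smul, neg_neg]

lemma pu {i j : Fin n} (hij : i ≠ j) :
    E i j * G.h (E i j) (E j i) + G.h (E i j) (E j i) * E i j = 0 := by
  have A := G.assoc (E i j) (E j i) (E i j)
  rw [G.anti' (E i j) (E j i), E_mul_E j i j, E_mul_E i j i, G.neg₂, mul_neg,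
    G.anti (G.h (E i j) (E j i)) (E i j), G.t2 hij, G.a_eq hij] at A
  linear_combination (norm := abel) -A

lemma qu {i j : Fin n} (hij : i ≠ j) :
    E j i * G.h (E i j) (E j i) + G.h (E i j) (E j i) * E j i = 0 := by
  have A := G.pu hij.symm
  rw [G.anti' (E i j) (E j i), mul_neg, neg_mul] at A
  linear_combination (norm := abel) -A

lemma ku {i j k : Fin n} (hij : i ≠ j) (hki : k ≠ i) (hkj : k ≠ j) :
    E k k * G.h (E i j) (E j i) + G.h (E i j) (E j i) * E k k = 0 := by
  have A1 := G.assoc (E k k) (E i j) (E j i)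
  rw [E_mul_E i j i, G.hdiag k i, G.hEkk hki hkj.symm, zero_mul,
    E_mul_E_ne hki k j, G.zero₁] at A1
  have A2 := G.assoc (E i j) (E j i) (E k k)
  rw [E_mul_E i j i, G.hdiag i k, G.hEE_disj hki.symm hkj, mul_zero,
    E_mul_E_ne (fun h => hki h.symm) j k, G.zero₂,
    G.anti (G.h (E i j) (E j i)) (E k k)] at A2
  linear_combination (norm := abel) A1 - A2

end GoodH

namespace GoodH

variable (G : GoodH n)

lemma entry_anticomm {a b : Fin n} {A : Mat n} (hA : E a b * A + A * E a b = 0)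
    (p q : Fin n) :
    (if p = a then A b q else 0) + (if q = b then A p a else 0) = 0 := by
  have := congrArg (fun M : Mat n => M p q) hA
  simpa [Matrix.add_apply, E_mul_apply, mul_E_apply] using this

lemma u_struct {i j : Fin n} (hij : i ≠ j) :
    G.h (E i j) (E j i) = (G.ga i j) • (E i i - E j j) := by
  have E1 := entry_anticomm (G.pu hij)
  have E2 := entry_anticomm (G.qu hij)
  ext p q
  rw [Matrix.smul_apply, Matrix.sub_apply, E_apply, E_apply, smul_eq_mul]
  by_cases hpi : p = i
  · by_cases hqi : q = i
    · simp [hpi, hqi, hij, ga]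
    · have h0 : G.h (E i j) (E j i) i q = 0 := by
        have := E2 j q
        simpa [hqi] using this
      simp [hpi, hqi, hij, h0]
  · by_cases hpj : p = j
    · by_cases hqj : q = j
      · have h0 : G.h (E i j) (E j i) j j + G.h (E i j) (E j i) i i = 0 := by
          have := E1 i j
          simpa using this
        have h1 : G.h (E i j) (E j i) j j = -(G.ga i j) := by
          rw [ga]; linear_combination h0
        rw [hpj, hqj, h1]
        rw [if_neg (show ¬(j = i ∧ j = i) from fun hh => hij hh.1.symm),
          if_pos (⟨rfl, rfl⟩ : j = j ∧ j = j)]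
        ring
      · have h0 : G.h (E i j) (E j i) j q = 0 := by
          have := E1 i q
          simpa [hqj] using this
        simp [hpj, hqj, hpi, h0, hij.symm]
    · by_cases hqi : q = i
      · have h0 : G.h (E i j) (E j i) p i = 0 := by
          have := E1 p j
          simpa [hpi] using this
        simp [hpi, hpj, hqi, h0]
      · by_cases hqj : q = j
        · have h0 : G.h (E i j) (E j i) p j = 0 := by
            have := E2 p i
            simpa [hpj, hij.symm] using this
          simp [hpi, hpj, hqj, h0]
        · have E3 := entry_anticomm (G.ku hij hpi hpj)
          by_cases hqp : q = p
          · have h0 : G.h (E i j) (E j i) p p = 0 := by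
              have := E3 p p
              simpa using this
            simp [hpi, hpj, hqp, h0]
          · have h0 : G.h (E i j) (E j i) p q = 0 := by
              have := E3 p q
              simpa [hqp] using this
            simp [hpi, hpj, hqi, hqj, h0]

end GoodH

namespace GoodH

variable (G : GoodH n)

lemma rel1 {i j : Fin n} (hij : i ≠ j) : G.al i j + (G.al i j) * (G.al i j) = 0 := by
  have A := G.assoc (E i i) (E i i) (E i j)
  rw [G.hdiag i i, E_mul_E i i i, E_mul_E i i j, G.zero₁, zero_mul, G.a_eq hij, G.smul₂,
    G.a_eq hij, mul_smul_comm, E_mul_E i i j, smul_smul] at A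
  have T := congrArg (fun M : Mat n => M i j) A
  simp only [Matrix.add_apply, Matrix.smul_apply, Matrix.zero_apply, E_apply, and_self,
    if_pos, smul_eq_mul, mul_one, zero_add, add_zero, if_true] at T
  linear_combination T

lemma rel2 {i j : Fin n} (hij : i ≠ j) :
    G.ga i j + G.al i j + 2 * G.al i j * G.ga i j = 0 := by
  have A := G.assoc (E i j) (E i j) (E j i)
  rw [G.refl_zero (E i j), E_mul_E i j i, E_mul_E_ne hij.symm i j, G.zero₁, zero_mul,
    G.u_struct hij, G.t3 hij, G.smul₂, G.sub₂, G.t3 hij, G.t2 hij,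
    mul_smul_comm, mul_sub, E_mul_E_ne hij.symm i i, E_mul_E i j j] at A
  have T := congrArg (fun M : Mat n => M i j) A
  simp only [Matrix.add_apply, Matrix.smul_apply, Matrix.sub_apply, Matrix.zero_apply,
    E_apply, and_self, if_pos, smul_eq_mul, mul_one, zero_add, add_zero, zero_sub,
    Matrix.neg_apply, mul_neg, neg_mul] at T
  linear_combination -T

lemma rel3 {i j : Fin n} (hij : i ≠ j) :
    G.ga i j + G.al j i + 2 * G.ga i j * G.al j i = 0 := by
  have A := G.assoc (E i j) (E j i) (E j i)
  rw [G.refl_zero (E j i), E_mul_E_ne hij j i, G.zero₂, mul_zero, E_mul_E i j i,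
    G.u_struct hij, G.t4 hij, G.smul₁, G.sub₁, G.t4 hij, G.a_eq hij.symm,
    smul_mul_assoc, sub_mul, E_mul_E_ne hij i i, E_mul_E j j i] at A
  have T := congrArg (fun M : Mat n => M j i) A
  simp only [Matrix.add_apply, Matrix.smul_apply, Matrix.sub_apply, Matrix.zero_apply,
    E_apply, and_self, if_pos, smul_eq_mul, mul_one, zero_add, add_zero, zero_sub,
    Matrix.neg_apply, mul_neg, neg_mul] at T
  linear_combination T

lemma rel4 {i j k : Fin n} (hij : i ≠ j) (hjk : j ≠ k) (hki : k ≠ i) :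
    G.ga i j * (1 + G.al j k) = 0 := by
  have A := G.assoc (E i j) (E j i) (E j k)
  rw [G.hEE_disj hij hjk.symm, E_mul_E_ne hij j k, G.zero₂, mul_zero,
    E_mul_E i j i, G.hEE_disj hij hki,
    G.u_struct hij, G.smul₁, G.sub₁, G.hEE_disj hij hki, G.a_eq hjk,
    smul_mul_assoc, sub_mul, E_mul_E_ne hij i k, E_mul_E j j k] at A
  have T := congrArg (fun M : Mat n => M j k) A
  simp only [Matrix.add_apply, Matrix.smul_apply, Matrix.sub_apply, Matrix.zero_apply,
    E_apply, and_self, if_pos, smul_eq_mul, mul_one, zero_add, add_zero, zero_sub,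
    Matrix.neg_apply, mul_neg, neg_mul] at T
  linear_combination T

lemma v_zero {i j k : Fin n} (hij : i ≠ j) (hjk : j ≠ k) (hki : k ≠ i)
    (h1 : G.h (E j k) (E k j) = 0) (h2 : G.h (E i j) (E j j) = 0)
    (h3 : G.h (E j k) (E j j) = 0) :
    G.h (E i k) (E k j) = 0 := by
  have hwz : G.h (E i j + E j k) (E k j) = 0 := by
    rw [G.add₁, G.hEE_disj hjk hij.symm, h1, add_zero]
  have hww : G.h (E i j + E j k) (E i j + E j k) = 0 := G.refl_zero _
  have e1 : (E i j + E j k) * E k j = E j j := by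
    rw [add_mul, E_mul_E_ne hjk i j, E_mul_E j k j, zero_add]
  have e2 : (E i j + E j k) * (E i j + E j k) = E i k := by
    rw [mul_add, add_mul, add_mul, E_mul_E_ne hij.symm i j, E_mul_E i j k,
      E_mul_E_ne hki j j, E_mul_E_ne hjk.symm j k]
    abel
  have A := G.assoc (E i j + E j k) (E i j + E j k) (E k j)
  rw [hwz, hww, e1, e2, mul_zero, zero_mul, G.zero₂, G.zero₁, G.add₁, h2, h3] at A
  linear_combination (norm := abel) -A

end GoodH

namespace GoodH

variable (G : GoodH n)

lemma ga_zero {i j : Fin n} (hij : i ≠ j) (h0 : G.al i j = 0) : G.ga i j = 0 := by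
  have := G.rel2 hij
  rw [h0] at this
  linear_combination this

lemma al_symm_zero {i j : Fin n} (hij : i ≠ j) (h0 : G.ga i j = 0) : G.al j i = 0 := by
  have := G.rel3 hij
  rw [h0] at this
  linear_combination this

lemma al_zero_of_ga {i j : Fin n} (hij : i ≠ j) (h0 : G.ga i j = 0) : G.al i j = 0 := by
  have := G.rel2 hij
  rw [h0] at this
  linear_combination this

/-- propagation step: if `al q r = 0` then `al p q = 0` and `al q p = 0`. -/
lemma prop_step {p q r : Fin n} (hpq : p ≠ q) (hqr : q ≠ r) (hrp : r ≠ p)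
    (h0 : G.al q r = 0) : G.al p q = 0 ∧ G.al q p = 0 := by
  have h4 := G.rel4 hpq hqr hrp
  rw [h0] at h4
  have hga : G.ga p q = 0 := by linear_combination h4
  exact ⟨G.al_zero_of_ga hpq hga, G.al_symm_zero hpq hga⟩

lemma all_al_zero {i0 i1 : Fin n} (h01 : i0 ≠ i1) (hz : G.al i0 i1 = 0) :
    ∀ p q : Fin n, p ≠ q → G.al p q = 0 := by
  have a10 : G.al i1 i0 = 0 := G.al_symm_zero h01 (G.ga_zero h01 hz)
  have A : ∀ p, p ≠ i0 → p ≠ i1 → G.al p i0 = 0 ∧ G.al i0 p = 0 := fun p hp0 hp1 =>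
    G.prop_step hp0 h01 (fun h => hp1 h.symm) hz
  have B : ∀ p, p ≠ i0 → p ≠ i1 → G.al p i1 = 0 ∧ G.al i1 p = 0 := fun p hp0 hp1 =>
    G.prop_step hp1 h01.symm (fun h => hp0 h.symm) a10
  intro p q hpq
  by_cases hq0 : q = i0
  · subst hq0
    by_cases hp1 : p = i1
    · subst hp1; exact a10
    · exact (A p hpq hp1).1
  · by_cases hq1 : q = i1
    · subst hq1
      by_cases hp0 : p = i0
      · subst hp0; exact hz
      · exact (B p hp0 hpq).1
    · by_cases hp0 : p = i0
      · subst hp0; exact (A q hq0 hq1).2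
      · exact (G.prop_step hpq hq0 (fun h => hp0 h.symm) (A q hq0 hq1).1).1

/-- if all `al` vanish then `h` vanishes on all pairs of matrix units. -/
lemma table_zero {i0 i1 : Fin n} (h01 : i0 ≠ i1) (hz : G.al i0 i1 = 0) :
    ∀ a b c d : Fin n, G.h (E a b) (E c d) = 0 := by
  have hal := G.all_al_zero h01 hz
  have hga : ∀ p q : Fin n, p ≠ q → G.ga p q = 0 := fun p q h => G.ga_zero h (hal p q h)
  -- h (E a a) (E c d) = 0 for c ≠ d
  have diagL : ∀ a c d : Fin n, c ≠ d → G.h (E a a) (E c d) = 0 := by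
    intro a c d hcd
    by_cases hac : a = c
    · subst hac
      rw [G.a_eq hcd, hal a d hcd, zero_smul]
    · by_cases had : a = d
      · subst had
        rw [G.t4 (show (a : Fin n) ≠ c from fun h => hac h),
          hal c a (fun h => hac h.symm), neg_zero, zero_smul]
      · exact G.hEkk (fun h => hac h) (fun h => had h.symm)
  have uz : ∀ p q : Fin n, p ≠ q → G.h (E p q) (E q p) = 0 := by
    intro p q h
    rw [G.u_struct h, hga p q h, zero_smul]
  intro a b c d
  by_cases hab : a = b
  · subst hab
    by_cases hcd : c = d
    · subst hcd; exact G.hdiag a c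
    · exact diagL a c d hcd
  · by_cases hcd : c = d
    · subst hcd
      rw [G.anti, diagL c a b hab, neg_zero]
    · by_cases hbc : b = c
      · subst hbc
        by_cases had : a = d
        · subst had
          exact uz a b hab
        · have hdb : (d : Fin n) ≠ b := fun h => hcd h.symm
          have h2 : G.h (E a d) (E d d) = 0 := by
            rw [G.anti, diagL d a d had, neg_zero]
          have h3 : G.h (E d b) (E d d) = 0 := by
            rw [G.anti, diagL d d b hdb, neg_zero]
          exact G.v_zero had hdb (fun h => hab h.symm) (uz d b hdb) h2 h3
      · by_cases had : a = d
        · subst had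
          have hcb : (c : Fin n) ≠ b := fun h => hbc h.symm
          have hba : (b : Fin n) ≠ a := fun h => hab h.symm
          have hac : (a : Fin n) ≠ c := fun h => hcd h.symm
          have h2 : G.h (E c b) (E b b) = 0 := by
            rw [G.anti, diagL b c b hcb, neg_zero]
          have h3 : G.h (E b a) (E b b) = 0 := by
            rw [G.anti, diagL b b a hba, neg_zero]
          rw [G.anti, G.v_zero hcb hba hac (uz b a hba) h2 h3, neg_zero]
        · exact G.hEE_disj (fun h => hbc h) (fun h => had h.symm)

lemma h_sum₁ {ι : Type*} (s : Finset ι) (g : ι → Mat n) (y : Mat n) :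
    G.h (∑ i ∈ s, g i) y = ∑ i ∈ s, G.h (g i) y := by
  classical
  induction s using Finset.cons_induction with
  | empty => simpa using G.zero₁ y
  | cons a s ha ih => rw [Finset.sum_cons, Finset.sum_cons, G.add₁, ih]

lemma h_sum₂ {ι : Type*} (s : Finset ι) (g : ι → Mat n) (x : Mat n) :
    G.h x (∑ i ∈ s, g i) = ∑ i ∈ s, G.h x (g i) := by
  classical
  induction s using Finset.cons_induction with
  | empty => simpa using G.zero₂ x
  | cons a s ha ih => rw [Finset.sum_cons, Finset.sum_cons, G.add₂, ih]

/-- if `al i0 i1 = 0` then `h` vanishes identically. -/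
lemma h_eq_zero {i0 i1 : Fin n} (h01 : i0 ≠ i1) (hz : G.al i0 i1 = 0) :
    ∀ x y : Mat n, G.h x y = 0 := by
  have tab := G.table_zero h01 hz
  intro x y
  have key : ∀ i j : Fin n, G.h (E i j) y = 0 := by
    intro i j
    conv_lhs => rw [matrix_eq_sum_single y]
    rw [G.h_sum₂]
    refine Finset.sum_eq_zero fun k _ => ?_
    rw [G.h_sum₂]
    refine Finset.sum_eq_zero fun l _ => ?_
    rw [smul_E, G.smul₂, tab, smul_zero]
  conv_lhs => rw [matrix_eq_sum_single x]
  rw [G.h_sum₁]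
  refine Finset.sum_eq_zero fun i _ => ?_
  rw [G.h_sum₁]
  refine Finset.sum_eq_zero fun j _ => ?_
  rw [smul_E, G.smul₁, key, smul_zero]

end GoodH

/-- Construct the `GoodH` structure from the hypotheses on `f`. -/
lemma build (f : Mat n → Mat n → Mat n)
    (hconv₁ : ∀ p : ℝ, 0 ≤ p → p ≤ 1 → ∀ x y z,
      f (p • x + (1 - p) • y) z = p • f x z + (1 - p) • f y z)
    (hconv₂ : ∀ p : ℝ, 0 ≤ p → p ≤ 1 → ∀ x y z,
      f x (p • y + (1 - p) • z) = p • f x y + (1 - p) • f x z)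
    (hcomm : ∀ x y, x * y = y * x → f x y = x * y)
    (htr : ∀ x y, (f x y).trace = (x * y).trace)
    (hassoc : ∀ x y z, f x (f y z) = f (f x y) z) :
    ∃ G : GoodH n, ∀ x y, G.h x y = f x y - x * y := by
  have f0₁ : ∀ z, f 0 z = 0 := fun z => by
    have := hcomm 0 z (by rw [zero_mul, mul_zero])
    rw [this, zero_mul]
  have f0₂ : ∀ z, f z 0 = 0 := fun z => by
    have := hcomm z 0 (by rw [zero_mul, mul_zero])
    rw [this, mul_zero]
  have half₁ : ∀ x z, f ((1/2 : ℝ) • x) z = (1/2 : ℝ) • f x z := by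
    intro x z
    have h := hconv₁ (1/2) (by norm_num) (by norm_num) x 0 z
    rw [smul_zero, add_zero, f0₁, smul_zero, add_zero] at h
    exact h
  have half₂ : ∀ x z, f x ((1/2 : ℝ) • z) = (1/2 : ℝ) • f x z := by
    intro x z
    have h := hconv₂ (1/2) (by norm_num) (by norm_num) x z 0
    rw [smul_zero, add_zero, f0₂, smul_zero, add_zero] at h
    exact h
  have fadd₁ : ∀ x y z, f (x + y) z = f x z + f y z := by
    intro x y z
    have h := hconv₁ (1/2) (by norm_num) (by norm_num) x y z
    have e : (1 : ℝ) - 1/2 = 1/2 := by norm_num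
    rw [e] at h
    have h2 : f ((1/2 : ℝ) • (x + y)) z = (1/2:ℝ) • f x z + (1/2:ℝ) • f y z := by
      rw [smul_add]; exact h
    rw [half₁] at h2
    have h3 := congrArg (fun M : Mat n => (2:ℝ) • M) h2
    simp only [smul_add, smul_smul] at h3
    norm_num at h3
    exact h3
  have fadd₂ : ∀ x y z, f x (y + z) = f x y + f x z := by
    intro x y z
    have h := hconv₂ (1/2) (by norm_num) (by norm_num) x y z
    have e : (1 : ℝ) - 1/2 = 1/2 := by norm_num
    rw [e] at h
    have h2 : f x ((1/2 : ℝ) • (y + z)) = (1/2:ℝ) • f x y + (1/2:ℝ) • f x z := by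
      rw [smul_add]; exact h
    rw [half₂] at h2
    have h3 := congrArg (fun M : Mat n => (2:ℝ) • M) h2
    simp only [smul_add, smul_smul] at h3
    norm_num at h3
    exact h3
  have fscal : ∀ (c : ℂ) (w : Mat n), f (c • (1 : Mat n)) w = c • w := by
    intro c w
    have hc : (c • (1 : Mat n)) * w = w * (c • 1) := by
      rw [smul_mul_assoc, one_mul, mul_smul_comm, mul_one]
    rw [hcomm _ _ hc, smul_mul_assoc, one_mul]
  have fscal' : ∀ (c : ℂ) (w : Mat n), f w (c • (1 : Mat n)) = c • w := by
    intro c w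
    have hc : w * (c • (1 : Mat n)) = (c • 1) * w := by
      rw [smul_mul_assoc, one_mul, mul_smul_comm, mul_one]
    rw [hcomm _ _ hc, mul_smul_comm, mul_one]
  have fsmul₁ : ∀ (c : ℂ) (x y : Mat n), f (c • x) y = c • f x y := by
    intro c x y
    have h := hassoc (c • (1 : Mat n)) x y
    rw [fscal, fscal] at h
    exact h.symm
  have fsmul₂ : ∀ (c : ℂ) (x y : Mat n), f x (c • y) = c • f x y := by
    intro c x y
    have h := hassoc x y (c • (1 : Mat n))
    rw [fscal', fscal'] at h
    exact h
  have fsub₁ : ∀ x y z : Mat n, f (x - y) z = f x z - f y z := by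
    intro x y z
    have hneg : f (-y) z = - f y z := by
      have := fsmul₁ (-1) y z
      simpa using this
    rw [sub_eq_add_neg, fadd₁, hneg, sub_eq_add_neg]
  have fsub₂ : ∀ x y z : Mat n, f x (y - z) = f x y - f x z := by
    intro x y z
    have hneg : f x (-z) = - f x z := by
      have := fsmul₂ (-1) x z
      simpa using this
    rw [sub_eq_add_neg, fadd₂, hneg, sub_eq_add_neg]
  have fsq : ∀ z, f z z = z * z := fun z => hcomm z z rfl
  have pol : ∀ x y, f x y + f y x = x * y + y * x := by
    intro x y
    have h := fsq (x + y)
    rw [fadd₁, fadd₂, fadd₂, fsq, fsq, mul_add, add_mul, add_mul] at h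
    linear_combination (norm := abel) h
  refine ⟨⟨fun x y => f x y - x * y, ?_, ?_, ?_, ?_, ?_, ?_, ?_, ?_⟩, fun x y => rfl⟩
  · intro x y z
    show f (x + y) z - (x + y) * z = (f x z - x * z) + (f y z - y * z)
    rw [fadd₁, add_mul]
    abel
  · intro x y z
    show f x (y + z) - x * (y + z) = (f x y - x * y) + (f x z - x * z)
    rw [fadd₂, mul_add]
    abel
  · intro c x y
    show f (c • x) y - (c • x) * y = c • (f x y - x * y)
    rw [fsmul₁, smul_mul_assoc, smul_sub]
  · intro c x y
    show f x (c • y) - x * (c • y) = c • (f x y - x * y)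
    rw [fsmul₂, mul_smul_comm, smul_sub]
  · intro x y hxy
    show f x y - x * y = 0
    rw [hcomm x y hxy, sub_self]
  · intro x y
    show f x y - x * y = -(f y x - y * x)
    linear_combination (norm := abel) pol x y
  · intro x y
    show (f x y - x * y).trace = 0
    rw [Matrix.trace_sub, htr, sub_self]
  · intro x y z
    show x * (f y z - y * z) + (f x (y * z) - x * (y * z))
        + (f x (f y z - y * z) - x * (f y z - y * z))
      = (f x y - x * y) * z + (f (x * y) z - (x * y) * z)
        + (f (f x y - x * y) z - (f x y - x * y) * z)
    rw [fsub₂, fsub₁, hassoc x y z]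
    noncomm_ring

end StarProdAux

open StarProdAux

/-- The only functions `⋆ : M_n × M_n → M_n` (`n ≥ 2`) that are convex-bilinear,
satisfy `x⋆y = xy` on commuting pairs, satisfy `Tr(x⋆y) = Tr(xy)`, and are associative,
are `x⋆y = xy` and `x⋆y = yx`. -/
theorem star_product_is_matrix_multiplication (n : ℕ) (hn : 2 ≤ n)
    (f : Matrix (Fin n) (Fin n) ℂ → Matrix (Fin n) (Fin n) ℂ → Matrix (Fin n) (Fin n) ℂ)
    (hconv₁ : ∀ p : ℝ, 0 ≤ p → p ≤ 1 → ∀ x y z,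
      f (p • x + (1 - p) • y) z = p • f x z + (1 - p) • f y z)
    (hconv₂ : ∀ p : ℝ, 0 ≤ p → p ≤ 1 → ∀ x y z,
      f x (p • y + (1 - p) • z) = p • f x y + (1 - p) • f x z)
    (hcomm : ∀ x y, x * y = y * x → f x y = x * y)
    (htr : ∀ x y, (f x y).trace = (x * y).trace)
    (hassoc : ∀ x y z, f x (f y z) = f (f x y) z) :
    (∀ x y, f x y = x * y) ∨ (∀ x y, f x y = y * x) := by
  classical
  set i0 : Fin n := ⟨0, by omega⟩ with hi0
  set i1 : Fin n := ⟨1, by omega⟩ with hi1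
  have h01 : i0 ≠ i1 := by
    rw [hi0, hi1]
    exact Fin.ne_of_val_ne (by norm_num)
  obtain ⟨G, hG⟩ := build f hconv₁ hconv₂ hcomm htr hassoc
  have hd := G.rel1 h01
  have hcases : G.al i0 i1 = 0 ∨ G.al i0 i1 = -1 := by
    have hmul : G.al i0 i1 * (1 + G.al i0 i1) = 0 := by linear_combination hd
    rcases mul_eq_zero.mp hmul with h | h
    · exact Or.inl h
    · exact Or.inr (by linear_combination h)
  rcases hcases with hal | hal
  · left
    intro x y
    have hz := G.h_eq_zero h01 hal x y
    rw [hG] at hz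
    exact sub_eq_zero.mp hz
  · right
    set g : Mat n → Mat n → Mat n := fun x y => f y x with hg
    have gconv₁ : ∀ p : ℝ, 0 ≤ p → p ≤ 1 → ∀ x y z,
        g (p • x + (1 - p) • y) z = p • g x z + (1 - p) • g y z := by
      intro p hp0 hp1 x y z
      exact hconv₂ p hp0 hp1 z x y
    have gconv₂ : ∀ p : ℝ, 0 ≤ p → p ≤ 1 → ∀ x y z,
        g x (p • y + (1 - p) • z) = p • g x y + (1 - p) • g x z := by
      intro p hp0 hp1 x y z
      exact hconv₁ p hp0 hp1 y z x
    have gcomm : ∀ x y, x * y = y * x → g x y = x * y := by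
      intro x y hxy
      show f y x = x * y
      rw [hcomm y x hxy.symm, hxy]
    have gtr : ∀ x y, (g x y).trace = (x * y).trace := by
      intro x y
      show (f y x).trace = (x * y).trace
      rw [htr y x, Matrix.trace_mul_comm]
    have gassoc : ∀ x y z, g x (g y z) = g (g x y) z := by
      intro x y z
      show f (f z y) x = f z (f y x)
      exact (hassoc z y x).symm
    obtain ⟨G', hG'⟩ := build g gconv₁ gconv₂ gcomm gtr gassoc
    have key : G'.al i0 i1 = 0 := by
      have e0 : G.h (E i0 i1) (E i0 i0) = E i0 i1 := by
        rw [G.t3 h01, hal]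
        simp
      have e1 : f (E i0 i1) (E i0 i0) = E i0 i1 := by
        have := hG (E i0 i1) (E i0 i0)
        rw [e0, E_mul_E_ne h01.symm i0 i0] at this
        linear_combination (norm := abel) -this
      have e2 : G'.h (E i0 i0) (E i0 i1) = 0 := by
        rw [hG']
        show f (E i0 i1) (E i0 i0) - E i0 i0 * E i0 i1 = 0
        rw [e1, E_mul_E i0 i0 i1, sub_self]
      show G'.h (E i0 i0) (E i0 i1) i0 i1 = 0
      rw [e2]
      rfl
    have hzero := G'.h_eq_zero h01 key
    intro x y
    have hz := hzero y x
    rw [hG'] at hz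
    have : g y x = y * x := sub_eq_zero.mp hz
    exact this
end

section
/- If a real-bilinear map ⋆ : H_n × H_n → H_n satisfies x⋆y = xy on commuting pairs, then its complex-bilinear extension to M_n × M_n satisfies x⋆y = xy whenever x is normal and xy = yx. -/
open Matrix
open scoped ComplexInnerProductSpace

section FugledeOp

variable {E : Type*} [NormedAddCommGroup E] [InnerProductSpace ℂ E] [FiniteDimensional ℂ E]

private lemma pt_aux {P Q : E →ₗ[ℂ] E} (hP : P.IsSymmetric) (hQ : Q.IsSymmetric)
    (hPQ : P * Q = Q * P) {w : E} (h : P w - Complex.I • Q w = 0) : P w = 0 ∧ Q w = 0 := by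
  have hinner : ⟪P w, Q w⟫ = ⟪Q w, P w⟫ := by
    have hc : P (Q w) = Q (P w) := by
      simpa [Module.End.mul_apply] using congrArg (fun T => T w) hPQ
    rw [hP w (Q w), hc, ← hQ w (P w)]
  have h0 : (0:ℂ) = ⟪P w - Complex.I • Q w, P w - Complex.I • Q w⟫ := by rw [h]; simp
  rw [inner_sub_left, inner_sub_right, inner_sub_right, inner_smul_left, inner_smul_right,
    inner_smul_left, inner_smul_right, hinner] at h0
  simp only [Complex.conj_I] at h0
  have h1 : (0:ℂ) = ⟪P w, P w⟫ + ⟪Q w, Q w⟫ := by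
    linear_combination h0 - (⟪Q w, Q w⟫ : ℂ) * Complex.I_sq
  rw [inner_self_eq_norm_sq_to_K, inner_self_eq_norm_sq_to_K] at h1
  norm_cast at h1
  have h2 : ‖P w‖^2 + ‖Q w‖^2 = (0:ℝ) := Complex.ofReal_eq_zero.mp h1.symm
  constructor <;>
  · rw [← norm_eq_zero]
    nlinarith [norm_nonneg (P w), norm_nonneg (Q w), sq_nonneg ‖P w‖, sq_nonneg ‖Q w‖]

private lemma fuglede_op {A B y : E →ₗ[ℂ] E} (hA : A.IsSymmetric) (hB : B.IsSymmetric)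
    (hAB : A * B = B * A)
    (h : (A - Complex.I • B) * y = y * (A - Complex.I • B)) :
    A * y = y * A ∧ B * y = y * B := by
  set S : Submodule ℂ E := LinearMap.ker (A * y - y * A) ⊓ LinearMap.ker (B * y - y * B) with hS
  have key : ∀ α γ : ℂ, Module.End.eigenspace A α ⊓ Module.End.eigenspace B γ ≤ S := by
    intro α γ v hv
    rcases Submodule.mem_inf.mp hv with ⟨hvA, hvB⟩
    by_cases hv0 : v = 0
    · simp [hv0]
    rw [Module.End.mem_eigenspace_iff] at hvA hvB
    have hα : (starRingEnd ℂ) α = α :=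
      hA.conj_eigenvalue_eq_self
        (Module.End.hasEigenvalue_of_hasEigenvector ⟨Module.End.mem_eigenspace_iff.mpr hvA, hv0⟩)
    have hγ : (starRingEnd ℂ) γ = γ :=
      hB.conj_eigenvalue_eq_self
        (Module.End.hasEigenvalue_of_hasEigenvector ⟨Module.End.mem_eigenspace_iff.mpr hvB, hv0⟩)
    set P : E →ₗ[ℂ] E := A - α • 1 with hPdef
    set Q : E →ₗ[ℂ] E := B - γ • 1 with hQdef
    have hPsym : P.IsSymmetric := by
      intro u z
      simp [hPdef, inner_sub_left, inner_sub_right, inner_smul_left, inner_smul_right,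
        hA u z, hα]
    have hQsym : Q.IsSymmetric := by
      intro u z
      simp [hQdef, inner_sub_left, inner_sub_right, inner_smul_left, inner_smul_right,
        hB u z, hγ]
    have hPQ : P * Q = Q * P := by
      simp only [hPdef, hQdef, mul_sub, sub_mul, smul_mul_assoc, mul_smul_comm, hAB,
        mul_one, one_mul, smul_smul, smul_sub, mul_comm α γ]
      abel
    have hcv := congrArg (fun T => T v) h
    simp only [Module.End.mul_apply, LinearMap.sub_apply, LinearMap.smul_apply,
      _root_.map_sub, _root_.map_smul, hvA, hvB] at hcv
    have hw : P (y v) - Complex.I • Q (y v) = 0 := by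
      simp only [hPdef, hQdef, LinearMap.sub_apply, LinearMap.smul_apply, Module.End.one_apply,
        smul_sub]
      rw [sub_eq_zero]
      rw [sub_eq_sub_iff_sub_eq_sub] at hcv
      exact hcv
    obtain ⟨hPw, hQw⟩ := pt_aux hPsym hQsym hPQ hw
    have hAw : A (y v) = α • (y v) := by
      simpa [hPdef, sub_eq_zero] using hPw
    have hBw : B (y v) = γ • (y v) := by
      simpa [hQdef, sub_eq_zero] using hQw
    refine Submodule.mem_inf.mpr ⟨?_, ?_⟩ <;>
      simp [LinearMap.mem_ker, Module.End.mul_apply, hvA, hvB, hAw, hBw, _root_.map_smul]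
  have htop : (⊤ : Submodule ℂ E) ≤ S := by
    rw [← hA.iSup_iSup_eigenspace_inf_eigenspace_eq_top_of_commute hB hAB]
    exact iSup_le fun α => iSup_le fun γ => key α γ
  constructor <;> ext v <;>
    [have h1 := (Submodule.mem_inf.mp (htop (Submodule.mem_top (x := v)))).1;
     have h1 := (Submodule.mem_inf.mp (htop (Submodule.mem_top (x := v)))).2] <;>
    · rw [LinearMap.mem_ker, LinearMap.sub_apply] at h1
      simpa [sub_eq_zero] using h1

end FugledeOp

private noncomputable def toE {n : ℕ} (M : Matrix (Fin n) (Fin n) ℂ) :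
    EuclideanSpace ℂ (Fin n) →ₗ[ℂ] EuclideanSpace ℂ (Fin n) :=
  (Matrix.toEuclideanCLM (𝕜 := ℂ) (n := Fin n) M : EuclideanSpace ℂ (Fin n) →L[ℂ] EuclideanSpace ℂ (Fin n))

private lemma toE_mul {n : ℕ} (M N : Matrix (Fin n) (Fin n) ℂ) :
    toE (M * N) = toE M * toE N := by
  unfold toE; rw [_root_.map_mul]; rfl

private lemma toE_sub_smul {n : ℕ} (M N : Matrix (Fin n) (Fin n) ℂ) :
    toE (M - Complex.I • N) = toE M - Complex.I • toE N := by
  unfold toE; rw [_root_.map_sub, _root_.map_smul]; rfl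

private lemma toE_symm {n : ℕ} {M : Matrix (Fin n) (Fin n) ℂ} (hM : M.IsHermitian) :
    (toE M).IsSymmetric := by
  have hsa : _root_.IsSelfAdjoint (Matrix.toEuclideanCLM (𝕜 := ℂ) M) := by
    have : star (Matrix.toEuclideanCLM (𝕜 := ℂ) M) = Matrix.toEuclideanCLM (𝕜 := ℂ) M := by
      rw [← map_star]
      exact congrArg _ hM
    exact this
  exact hsa.isSymmetric

private lemma toE_inj {n : ℕ} {M N : Matrix (Fin n) (Fin n) ℂ} (h : toE M = toE N) : M = N :=
  (Matrix.toEuclideanCLM (𝕜 := ℂ) (n := Fin n)).injective (ContinuousLinearMap.coe_injective h)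

private lemma fuglede_mat {n : ℕ} {A B y : Matrix (Fin n) (Fin n) ℂ}
    (hA : A.IsHermitian) (hB : B.IsHermitian) (hAB : A * B = B * A)
    (h : (A - Complex.I • B) * y = y * (A - Complex.I • B)) :
    A * y = y * A ∧ B * y = y * B := by
  have hABop := fuglede_op (toE_symm hA) (toE_symm hB)
    (by rw [← toE_mul, ← toE_mul, hAB])
    (y := toE y)
    (by rw [← toE_sub_smul, ← toE_mul, ← toE_mul, h])
  exact ⟨toE_inj (by rw [toE_mul, toE_mul, hABop.1]),
         toE_inj (by rw [toE_mul, toE_mul, hABop.2])⟩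

/-- The Hermitian part of a matrix. -/
noncomputable def hPart {n : ℕ} (x : Matrix (Fin n) (Fin n) ℂ) : Matrix (Fin n) (Fin n) ℂ :=
  (2 : ℂ)⁻¹ • (x + xᴴ)

/-- The anti-Hermitian part of a matrix. -/
noncomputable def aPart {n : ℕ} (x : Matrix (Fin n) (Fin n) ℂ) : Matrix (Fin n) (Fin n) ℂ :=
  (2 : ℂ)⁻¹ • (x - xᴴ)

/-- The complex-bilinear extension of a product on Hermitian matrices. -/
noncomputable def extStar {n : ℕ}
    (f : Matrix (Fin n) (Fin n) ℂ → Matrix (Fin n) (Fin n) ℂ → Matrix (Fin n) (Fin n) ℂ)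
    (x y : Matrix (Fin n) (Fin n) ℂ) : Matrix (Fin n) (Fin n) ℂ :=
  f (hPart x) (hPart y) - Complex.I • f (hPart x) (Complex.I • aPart y)
    - Complex.I • f (Complex.I • aPart x) (hPart y)
    - f (Complex.I • aPart x) (Complex.I • aPart y)

private lemma hPart_herm {n : ℕ} (x : Matrix (Fin n) (Fin n) ℂ) : (hPart x).IsHermitian := by
  unfold hPart Matrix.IsHermitian
  rw [conjTranspose_smul, conjTranspose_add, conjTranspose_conjTranspose]
  congr 1
  · simp [Complex.ext_iff]
  · exact add_comm _ _

private lemma aPartI_herm {n : ℕ} (x : Matrix (Fin n) (Fin n) ℂ) :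
    (Complex.I • aPart x).IsHermitian := by
  unfold aPart Matrix.IsHermitian
  rw [conjTranspose_smul, conjTranspose_smul, conjTranspose_sub, conjTranspose_conjTranspose]
  rw [smul_smul, smul_smul]
  have : star Complex.I * star (2:ℂ)⁻¹ = -(Complex.I * (2:ℂ)⁻¹) := by
    simp [Complex.ext_iff]
  rw [this, neg_smul, smul_sub, smul_sub, neg_sub]

private lemma decompX {n : ℕ} (x : Matrix (Fin n) (Fin n) ℂ) :
    x = hPart x - Complex.I • (Complex.I • aPart x) := by
  rw [smul_smul, Complex.I_mul_I, neg_one_smul, sub_neg_eq_add]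
  unfold hPart aPart
  module

private lemma decompXH {n : ℕ} (x : Matrix (Fin n) (Fin n) ℂ) :
    xᴴ = hPart x + Complex.I • (Complex.I • aPart x) := by
  rw [smul_smul, Complex.I_mul_I, neg_one_smul]
  unfold hPart aPart
  module

/-- If a real-bilinear map `⋆ : H_n × H_n → H_n` satisfies `x⋆y = xy` on commuting pairs,
then its complex-bilinear extension satisfies `x⋆y = xy` whenever `x` is normal and
`xy = yx`. -/
theorem extStar_eq_mul_of_normal_commute (n : ℕ)
    (f : Matrix (Fin n) (Fin n) ℂ → Matrix (Fin n) (Fin n) ℂ → Matrix (Fin n) (Fin n) ℂ)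
    (hH : ∀ x y, x.IsHermitian → y.IsHermitian → (f x y).IsHermitian)
    (hlin₁ : ∀ (r : ℝ) (x y z : Matrix (Fin n) (Fin n) ℂ),
      x.IsHermitian → y.IsHermitian → z.IsHermitian →
      f (r • x + y) z = r • f x z + f y z)
    (hlin₂ : ∀ (r : ℝ) (x y z : Matrix (Fin n) (Fin n) ℂ),
      x.IsHermitian → y.IsHermitian → z.IsHermitian →
      f x (r • y + z) = r • f x y + f x z)
    (hcomm : ∀ x y, x.IsHermitian → y.IsHermitian → x * y = y * x → f x y = x * y) :
    ∀ x y : Matrix (Fin n) (Fin n) ℂ, x * xᴴ = xᴴ * x → x * y = y * x →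
      extStar f x y = x * y := by
  intro x y hx hxy
  set A := hPart x with hA0
  set B := Complex.I • aPart x with hB0
  set C := hPart y with hC0
  set D := Complex.I • aPart y with hD0
  have hAh : A.IsHermitian := hPart_herm x
  have hBh : B.IsHermitian := aPartI_herm x
  have hCh : C.IsHermitian := hPart_herm y
  have hDh : D.IsHermitian := aPartI_herm y
  have hxd : x = A - Complex.I • B := decompX x
  have hxH : xᴴ = A + Complex.I • B := decompXH x
  have hyd : y = C - Complex.I • D := decompX y
  have e : (A - Complex.I • B) * (A + Complex.I • B)
      = (A + Complex.I • B) * (A - Complex.I • B) := by rw [← hxd, ← hxH]; exact hx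
  have hABc : A * B = B * A := by
    have e2 : ((2:ℂ) * Complex.I) • (A * B - B * A) = 0 := by
      have expand : ((2:ℂ) * Complex.I) • (A * B - B * A)
          = (A - Complex.I • B) * (A + Complex.I • B)
            - (A + Complex.I • B) * (A - Complex.I • B) := by
        simp only [mul_add, add_mul, mul_sub, sub_mul, smul_mul_assoc, mul_smul_comm,
          smul_smul, smul_sub, smul_add]
        module
      rw [expand, e, sub_self]
    have h2I : ((2:ℂ) * Complex.I) ≠ 0 := by
      simp [Complex.I_ne_zero]
    exact sub_eq_zero.mp ((smul_eq_zero.mp e2).resolve_left h2I)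
  have hcomm' : (A - Complex.I • B) * y = y * (A - Complex.I • B) := by
    rw [← hxd]; exact hxy
  obtain ⟨hAy, hBy⟩ := fuglede_mat hAh hBh hABc hcomm'
  have hAyH : A * yᴴ = yᴴ * A := by
    have h' := congrArg conjTranspose hAy
    rw [conjTranspose_mul, conjTranspose_mul, hAh.eq] at h'
    exact h'.symm
  have hByH : B * yᴴ = yᴴ * B := by
    have h' := congrArg conjTranspose hBy
    rw [conjTranspose_mul, conjTranspose_mul, hBh.eq] at h'
    exact h'.symm
  have hAC : A * C = C * A := by
    rw [hC0]; unfold hPart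
    simp only [mul_smul_comm, smul_mul_assoc, mul_add, add_mul, hAy, hAyH]
  have hAD : A * D = D * A := by
    rw [hD0]; unfold aPart
    simp only [mul_smul_comm, smul_mul_assoc, mul_sub, sub_mul, hAy, hAyH]
  have hBC : B * C = C * B := by
    rw [hC0]; unfold hPart
    simp only [mul_smul_comm, smul_mul_assoc, mul_add, add_mul, hBy, hByH]
  have hBD : B * D = D * B := by
    rw [hD0]; unfold aPart
    simp only [mul_smul_comm, smul_mul_assoc, mul_sub, sub_mul, hBy, hByH]
  have f1 := hcomm A C hAh hCh hAC
  have f2 := hcomm A D hAh hDh hAD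
  have f3 := hcomm B C hBh hCh hBC
  have f4 := hcomm B D hBh hDh hBD
  show f A C - Complex.I • f A D - Complex.I • f B C - f B D = x * y
  rw [f1, f2, f3, f4, hxd, hyd]
  simp only [mul_sub, sub_mul, smul_mul_assoc, mul_smul_comm, smul_smul, smul_sub,
    Complex.I_mul_I, neg_one_smul]
  module
end

section
/- If a real-bilinear map ⋆ : H_n × H_n → H_n satisfies x⋆y = xy on all commuting pairs, then its complex-bilinear extension to M_n × M_n satisfies x⋆y = xy on all commuting pairs x, y ∈ M_n. -/
open Matrix

set_option linter.unusedSectionVars false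
set_option linter.unusedVariables false

namespace ExtStarProof

variable {n : ℕ} {V : Type*} [AddCommGroup V] [Module ℂ V]

noncomputable abbrev SB (i j : Fin n) : Matrix (Fin n) (Fin n) ℂ :=
  Matrix.single i j (1 : ℂ)

lemma SB_mul_same (i j k : Fin n) : SB i j * SB j k = SB i k := by
  rw [single_mul_single_same, one_mul]

lemma SB_mul_ne (i j k l : Fin n) (h : j ≠ k) : SB i j * SB k l = 0 :=
  single_mul_single_of_ne _ _ _ _ h _

variable (D : Matrix (Fin n) (Fin n) ℂ →ₗ[ℂ] Matrix (Fin n) (Fin n) ℂ →ₗ[ℂ] V)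

section units

variable (hanti : ∀ x y, D x y = - D y x)
  (hE2 : ∀ a b s, D s (a*b+b*a) + D a (b*s+s*b) + D b (a*s+s*a) = 0)

include hanti in
lemma D_self (x) : D x x = 0 := by
  have h : (2:ℂ) • D x x = 0 := by
    rw [two_smul]
    nth_rewrite 2 [hanti x x]
    abel
  have := smul_eq_zero.mp h
  simpa using this

include hanti hE2 in
lemma Lq (i l : Fin n) (h : i ≠ l) :
    D (SB i l) (SB l l) = D (SB i i) (SB i l) := by
  have e := hE2 (SB i i) (SB l l) (SB i l)
  rw [SB_mul_ne _ _ _ _ h, SB_mul_ne _ _ _ _ (Ne.symm h), SB_mul_ne _ _ _ _ (Ne.symm h),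
      SB_mul_same, SB_mul_same, SB_mul_ne _ _ _ _ (Ne.symm h)] at e
  simp only [add_zero, zero_add, map_zero] at e
  rw [hanti (SB l l) (SB i l)] at e
  linear_combination (norm := abel) -e

include hanti hE2 in
lemma Lc (i j l : Fin n) (hij : i ≠ j) (_hjl : j ≠ l) (hil : i ≠ l) :
    D (SB i j) (SB j l) = D (SB i i) (SB i l) := by
  have e := hE2 (SB i i) (SB j l) (SB i j)
  rw [SB_mul_ne _ _ _ _ hij, SB_mul_ne _ _ _ _ (Ne.symm hil), SB_mul_ne _ _ _ _ (Ne.symm hil),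
      SB_mul_same, SB_mul_same, SB_mul_ne _ _ _ _ (Ne.symm hij)] at e
  simp only [add_zero, zero_add, map_zero] at e
  rw [hanti (SB j l) (SB i j)] at e
  linear_combination (norm := abel) -e

include hanti hE2 in
lemma LD0 (i j k l : Fin n) (hjk : j ≠ k) (hli : l ≠ i) (hkilj : ¬(k = i ∧ l = j)) :
    D (SB i j) (SB k l) = 0 := by
  have pab : SB i j * SB k l = 0 := SB_mul_ne _ _ _ _ hjk
  have pba : SB k l * SB i j = 0 := SB_mul_ne _ _ _ _ hli
  by_cases hki : k = i
  · have hlj : l ≠ j := fun h => hkilj ⟨hki, h⟩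
    have hlk : l ≠ k := fun h => hli (h.trans hki)
    have e := hE2 (SB i j) (SB k l) (SB l l)
    rw [pab, pba, SB_mul_same, SB_mul_ne _ _ _ _ hlk, SB_mul_ne _ _ _ _ (Ne.symm hlj),
        SB_mul_ne _ _ _ _ hli] at e
    · simp only [add_zero, zero_add, map_zero] at e
      exact e
  · by_cases hlk : l = k
    · have e := hE2 (SB i j) (SB k l) (SB k k)
      rw [pab, pba, hlk, SB_mul_same, SB_mul_ne _ _ _ _ hjk,
          SB_mul_ne _ _ _ _ hki] at e
      simp only [add_zero, zero_add, map_zero, map_add] at e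
      have h2 : (2:ℂ) • D (SB i j) (SB k k) = 0 := by
        rw [two_smul]; exact e
      rw [hlk]
      simpa using (smul_eq_zero.mp h2)
    · have e := hE2 (SB i j) (SB k l) (SB k k)
      rw [pab, pba, SB_mul_ne _ _ _ _ hlk, SB_mul_same, SB_mul_ne _ _ _ _ hjk,
          SB_mul_ne _ _ _ _ hki] at e
      simp only [add_zero, zero_add, map_zero] at e
      exact e

include hanti hE2 in
lemma Lcoc (i j k : Fin n) (hij : i ≠ j) (hjk : j ≠ k) (hki : k ≠ i) :
    D (SB k i) (SB i k) + D (SB i j) (SB j i) + D (SB j k) (SB k j) = 0 := by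
  have e := hE2 (SB i j) (SB j k) (SB k i)
  rw [SB_mul_same, SB_mul_ne _ _ _ _ hki, SB_mul_same, SB_mul_ne _ _ _ _ hij,
      SB_mul_same, SB_mul_ne _ _ _ _ hjk] at e
  simp only [add_zero, zero_add] at e
  exact e

end units

section main

variable (hanti : ∀ x y, D x y = - D y x)
  (hE2 : ∀ a b s, D s (a*b+b*a) + D a (b*s+s*b) + D b (a*s+s*a) = 0)

/-- The coefficient function: `Φ` such that `D x y = Φ (xy - yx)`. -/
noncomputable def Cf (z i l : Fin n) : V :=
  if i = l then D (SB i z) (SB z i) else D (SB i i) (SB i l)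

variable (z : Fin n)

lemma Cf_diag (i : Fin n) : Cf D z i i = D (SB i z) (SB z i) := if_pos rfl

lemma Cf_off (i l : Fin n) (h : i ≠ l) : Cf D z i l = D (SB i i) (SB i l) := if_neg h

include hanti hE2 in
lemma Lchain (i j l : Fin n) (hil : i ≠ l) :
    D (SB i j) (SB j l) = D (SB i i) (SB i l) := by
  by_cases hij : i = j
  · subst hij; rfl
  · by_cases hjl : j = l
    · subst hjl; exact Lq D hanti hE2 _ _ hil
    · exact Lc D hanti hE2 i j l hij hjl hil

include hanti hE2 in
lemma Lm (i j : Fin n) : D (SB i j) (SB j i) = Cf D z i i - Cf D z j j := by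
  rw [Cf_diag, Cf_diag]
  by_cases hij : i = j
  · subst hij; rw [sub_self]; exact D_self D hanti _
  · by_cases hjz : j = z
    · subst hjz
      rw [D_self D hanti (SB j j), sub_zero]
    · by_cases hiz : i = z
      · subst hiz
        rw [D_self D hanti (SB i i), zero_sub, hanti (SB i j) (SB j i)]
      · have e := Lcoc D hanti hE2 i j z hij hjz (fun h => hiz h.symm)
        have h1 : D (SB z i) (SB i z) = - D (SB i z) (SB z i) :=
            hanti (SB z i) (SB i z)
        rw [h1] at e
        linear_combination (norm := abel) e

include hanti hE2 in
lemma unit (i j k l : Fin n) : D (SB i j) (SB k l)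
    = (if j = k then Cf D z i l else 0) - (if l = i then Cf D z k j else 0) := by
  by_cases hjk : j = k
  · subst hjk
    by_cases hli : l = i
    · subst hli
      rw [if_pos rfl, if_pos rfl]
      exact Lm D hanti hE2 z l j
    · rw [if_pos rfl, if_neg hli, sub_zero,
          Cf_off D z i l (fun h => hli h.symm)]
      exact Lchain D hanti hE2 i j l (fun h => hli h.symm)
  · by_cases hli : l = i
    · subst hli
      rw [if_neg hjk, if_pos rfl, zero_sub, hanti (SB l j) (SB k l),
          Cf_off D z k j (fun h => hjk h.symm),
          Lchain D hanti hE2 k l j (fun h => hjk h.symm)]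
    · rw [if_neg hjk, if_neg hli, sub_zero]
      by_cases hd : k = i ∧ l = j
      · obtain ⟨rfl, rfl⟩ := hd
        exact D_self D hanti _
      · exact LD0 D hanti hE2 i j k l hjk hli hd

include hanti hE2 in
theorem core : ∀ x y : Matrix (Fin n) (Fin n) ℂ, x * y = y * x → D x y = 0 := by
  rcases Nat.eq_zero_or_pos n with rfl | hn
  · intro x y _
    have hx0 : x = 0 := by ext i; exact i.elim0
    rw [hx0]; simp
  intro x y hxy
  have z : Fin n := ⟨0, hn⟩
  have hx : x = ∑ i, ∑ j, (x i j) • SB i j := by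
    conv_lhs => rw [matrix_eq_sum_single x]
    refine Finset.sum_congr rfl fun i _ => Finset.sum_congr rfl fun j _ => ?_
    rw [smul_single, smul_eq_mul, mul_one]
  have hy : y = ∑ k, ∑ l, (y k l) • SB k l := by
    conv_lhs => rw [matrix_eq_sum_single y]
    refine Finset.sum_congr rfl fun i _ => Finset.sum_congr rfl fun j _ => ?_
    rw [smul_single, smul_eq_mul, mul_one]
  have e1 : D x y = ∑ i, ∑ j, x i j • D (SB i j) y := by
    conv_lhs => rw [hx]
    simp only [map_sum, _root_.map_smul, LinearMap.sum_apply, LinearMap.smul_apply]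
  have e2 : ∀ i j : Fin n, D (SB i j) y = ∑ k, ∑ l, y k l • D (SB i j) (SB k l) := by
    intro i j
    conv_lhs => rw [hy]
    simp only [map_sum, _root_.map_smul]
  have expand : D x y
      = ∑ i, ∑ j, ∑ k, ∑ l, (x i j * y k l) • D (SB i j) (SB k l) := by
    rw [e1]
    simp only [e2, Finset.smul_sum, smul_smul]
  rw [expand]
  have step : ∀ i j k l : Fin n, (x i j * y k l) • D (SB i j) (SB k l)
      = (if j = k then (x i j * y k l) • Cf D z i l else 0)
        - (if l = i then (x i j * y k l) • Cf D z k j else 0) := by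
    intro i j k l
    rw [unit D hanti hE2 z i j k l, smul_sub]
    congr 1 <;> split_ifs <;> simp
  simp only [step, Finset.sum_sub_distrib]
  have S1 : (∑ i, ∑ j, ∑ k, ∑ l,
      (if j = k then (x i j * y k l) • Cf D z i l else 0))
      = ∑ i, ∑ l, ((x * y) i l) • Cf D z i l := by
    refine Finset.sum_congr rfl fun i _ => ?_
    calc ∑ j, ∑ k, ∑ l, (if j = k then (x i j * y k l) • Cf D z i l else 0)
        = ∑ j, ∑ l, (x i j * y j l) • Cf D z i l := by
          refine Finset.sum_congr rfl fun j _ => ?_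
          rw [Finset.sum_comm]
          refine Finset.sum_congr rfl fun l _ => ?_
          simp
      _ = ∑ l, ∑ j, (x i j * y j l) • Cf D z i l := Finset.sum_comm
      _ = ∑ l, ((x * y) i l) • Cf D z i l := by
          refine Finset.sum_congr rfl fun l _ => ?_
          rw [Matrix.mul_apply, Finset.sum_smul]
  have S2 : (∑ i, ∑ j, ∑ k, ∑ l,
      (if l = i then (x i j * y k l) • Cf D z k j else 0))
      = ∑ k, ∑ j, ((y * x) k j) • Cf D z k j := by
    calc (∑ i, ∑ j, ∑ k, ∑ l,
        (if l = i then (x i j * y k l) • Cf D z k j else 0))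
        = ∑ i, ∑ j, ∑ k, (x i j * y k i) • Cf D z k j := by
          refine Finset.sum_congr rfl fun i _ => Finset.sum_congr rfl fun j _ =>
            Finset.sum_congr rfl fun k _ => ?_
          simp
      _ = ∑ j, ∑ i, ∑ k, (x i j * y k i) • Cf D z k j := Finset.sum_comm
      _ = ∑ j, ∑ k, ∑ i, (x i j * y k i) • Cf D z k j := by
          refine Finset.sum_congr rfl fun j _ => ?_
          exact Finset.sum_comm
      _ = ∑ k, ∑ j, ∑ i, (x i j * y k i) • Cf D z k j := Finset.sum_comm
      _ = ∑ k, ∑ j, ((y * x) k j) • Cf D z k j := by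
          refine Finset.sum_congr rfl fun k _ => Finset.sum_congr rfl fun j _ => ?_
          rw [Matrix.mul_apply, Finset.sum_smul]
          refine Finset.sum_congr rfl fun i _ => ?_
          rw [mul_comm]
  rw [S1, S2, hxy, sub_eq_zero]

end main


variable {n : ℕ}

/-- The "imaginary Hermitian part". -/
noncomputable def kPart (x : Matrix (Fin n) (Fin n) ℂ) : Matrix (Fin n) (Fin n) ℂ :=
  Complex.I • aPart x

lemma extStar_def (f : Matrix (Fin n) (Fin n) ℂ → Matrix (Fin n) (Fin n) ℂ → Matrix (Fin n) (Fin n) ℂ)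
    (x y : Matrix (Fin n) (Fin n) ℂ) :
    extStar f x y = f (hPart x) (hPart y) - Complex.I • f (hPart x) (kPart y)
      - Complex.I • f (kPart x) (hPart y) - f (kPart x) (kPart y) := rfl

lemma hPart_isHermitian (x : Matrix (Fin n) (Fin n) ℂ) : (hPart x).IsHermitian := by
  unfold Matrix.IsHermitian hPart
  rw [conjTranspose_smul, conjTranspose_add, conjTranspose_conjTranspose]
  congr 1
  · simp
  · exact add_comm _ _

lemma kPart_isHermitian (x : Matrix (Fin n) (Fin n) ℂ) : (kPart x).IsHermitian := by
  unfold Matrix.IsHermitian kPart aPart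
  rw [conjTranspose_smul, conjTranspose_smul, conjTranspose_sub, conjTranspose_conjTranspose]
  simp only [Complex.star_def, Complex.conj_I, map_inv₀, Complex.conj_ofNat]
  module

lemma decomp (x : Matrix (Fin n) (Fin n) ℂ) :
    x = hPart x + (-Complex.I) • kPart x := by
  unfold hPart kPart aPart
  rw [smul_smul]
  ext i j
  simp only [Matrix.add_apply, Matrix.smul_apply, Matrix.sub_apply, smul_eq_mul]
  have : -Complex.I * Complex.I = 1 := by
    rw [neg_mul, Complex.I_mul_I, neg_neg]
  rw [this]
  ring

lemma hPart_add (x y : Matrix (Fin n) (Fin n) ℂ) :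
    hPart (x + y) = hPart x + hPart y := by
  unfold hPart
  rw [conjTranspose_add]
  module

lemma kPart_add (x y : Matrix (Fin n) (Fin n) ℂ) :
    kPart (x + y) = kPart x + kPart y := by
  unfold kPart aPart
  rw [conjTranspose_add]
  module

lemma hPart_real_smul (r : ℝ) (x : Matrix (Fin n) (Fin n) ℂ) :
    hPart ((r:ℂ) • x) = (r:ℂ) • hPart x := by
  unfold hPart
  rw [conjTranspose_smul]
  simp only [Complex.star_def, Complex.conj_ofReal]
  module

lemma kPart_real_smul (r : ℝ) (x : Matrix (Fin n) (Fin n) ℂ) :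
    kPart ((r:ℂ) • x) = (r:ℂ) • kPart x := by
  unfold kPart aPart
  rw [conjTranspose_smul]
  simp only [Complex.star_def, Complex.conj_ofReal]
  module

lemma hPart_I_smul (x : Matrix (Fin n) (Fin n) ℂ) :
    hPart (Complex.I • x) = kPart x := by
  unfold hPart kPart aPart
  rw [conjTranspose_smul]
  simp only [Complex.star_def, Complex.conj_I]
  module

lemma kPart_I_smul (x : Matrix (Fin n) (Fin n) ℂ) :
    kPart (Complex.I • x) = - hPart x := by
  unfold hPart kPart aPart
  rw [conjTranspose_smul]
  simp only [Complex.star_def, Complex.conj_I, neg_smul, sub_neg_eq_add, ← smul_add,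
    smul_smul]
  have h : Complex.I * ((2:ℂ)⁻¹ * Complex.I) = -(2:ℂ)⁻¹ := by
    have := Complex.I_mul_I
    ring_nf
    rw [Complex.I_sq]
    ring
  rw [h, neg_smul]

lemma hPart_of_herm {a : Matrix (Fin n) (Fin n) ℂ} (ha : a.IsHermitian) :
    hPart a = a := by
  unfold hPart
  rw [ha]
  match_scalars
  ring

lemma kPart_of_herm {a : Matrix (Fin n) (Fin n) ℂ} (ha : a.IsHermitian) :
    kPart a = 0 := by
  unfold kPart aPart
  rw [ha, sub_self, smul_zero, smul_zero]

section flem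

variable {f : Matrix (Fin n) (Fin n) ℂ → Matrix (Fin n) (Fin n) ℂ → Matrix (Fin n) (Fin n) ℂ}
  (hlin₁ : ∀ (r : ℝ) (x y z : Matrix (Fin n) (Fin n) ℂ),
      x.IsHermitian → y.IsHermitian → z.IsHermitian →
      f (r • x + y) z = r • f x z + f y z)
  (hlin₂ : ∀ (r : ℝ) (x y z : Matrix (Fin n) (Fin n) ℂ),
      x.IsHermitian → y.IsHermitian → z.IsHermitian →
      f x (r • y + z) = r • f x y + f x z)
  (hcomm : ∀ x y, x.IsHermitian → y.IsHermitian → x * y = y * x → f x y = x * y)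

lemma realsmul (r : ℝ) (A : Matrix (Fin n) (Fin n) ℂ) : r • A = (r:ℂ) • A := by
  ext i j
  simp [Complex.real_smul]

include hlin₁ in
lemma f_zero₁ {z : Matrix (Fin n) (Fin n) ℂ} (hz : z.IsHermitian) : f 0 z = 0 := by
  have h := hlin₁ 1 0 0 z Matrix.isHermitian_zero Matrix.isHermitian_zero hz
  rw [one_smul, add_zero, one_smul] at h
  have h2 : f 0 z + f 0 z = f 0 z + 0 := by rw [add_zero, ← h]
  exact add_left_cancel h2

include hlin₂ in
lemma f_zero₂ {z : Matrix (Fin n) (Fin n) ℂ} (hz : z.IsHermitian) : f z 0 = 0 := by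
  have h := hlin₂ 1 z 0 0 hz Matrix.isHermitian_zero Matrix.isHermitian_zero
  rw [one_smul, add_zero, one_smul] at h
  have h2 : f z 0 + f z 0 = f z 0 + 0 := by rw [add_zero, ← h]
  exact add_left_cancel h2

include hlin₁ in
lemma f_add₁ {a b z : Matrix (Fin n) (Fin n) ℂ} (ha : a.IsHermitian) (hb : b.IsHermitian)
    (hz : z.IsHermitian) : f (a + b) z = f a z + f b z := by
  have h := hlin₁ 1 a b z ha hb hz
  rwa [one_smul, one_smul] at h

include hlin₂ in
lemma f_add₂ {a b z : Matrix (Fin n) (Fin n) ℂ} (ha : a.IsHermitian) (hb : b.IsHermitian)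
    (hz : z.IsHermitian) : f z (a + b) = f z a + f z b := by
  have h := hlin₂ 1 z a b hz ha hb
  rwa [one_smul, one_smul] at h

include hlin₁ in
lemma f_smul₁ (r : ℝ) {a z : Matrix (Fin n) (Fin n) ℂ} (ha : a.IsHermitian)
    (hz : z.IsHermitian) : f ((r:ℂ) • a) z = (r:ℂ) • f a z := by
  have h := hlin₁ r a 0 z ha Matrix.isHermitian_zero hz
  rw [add_zero, f_zero₁ hlin₁ hz, add_zero, realsmul, realsmul] at h
  exact h

include hlin₂ in
lemma f_smul₂ (r : ℝ) {a z : Matrix (Fin n) (Fin n) ℂ} (ha : a.IsHermitian)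
    (hz : z.IsHermitian) : f z ((r:ℂ) • a) = (r:ℂ) • f z a := by
  have h := hlin₂ r z a 0 hz ha Matrix.isHermitian_zero
  rw [add_zero, f_zero₂ hlin₂ hz, add_zero, realsmul, realsmul] at h
  exact h

include hlin₁ in
lemma f_neg₁ {a z : Matrix (Fin n) (Fin n) ℂ} (ha : a.IsHermitian)
    (hz : z.IsHermitian) : f (-a) z = - f a z := by
  have h := f_smul₁ hlin₁ (-1) ha hz
  simpa using h

include hlin₂ in
lemma f_neg₂ {a z : Matrix (Fin n) (Fin n) ℂ} (ha : a.IsHermitian)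
    (hz : z.IsHermitian) : f z (-a) = - f z a := by
  have h := f_smul₂ hlin₂ (-1) ha hz
  simpa using h

section esl

-- Hermitian shortcuts
variable (x y : Matrix (Fin n) (Fin n) ℂ)

include hlin₁ in
lemma ES_add₁ (x x' y : Matrix (Fin n) (Fin n) ℂ) :
    extStar f (x + x') y = extStar f x y + extStar f x' y := by
  rw [extStar_def, extStar_def, extStar_def, hPart_add, kPart_add,
    f_add₁ hlin₁ (hPart_isHermitian x) (hPart_isHermitian x') (hPart_isHermitian y),
    f_add₁ hlin₁ (hPart_isHermitian x) (hPart_isHermitian x') (kPart_isHermitian y),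
    f_add₁ hlin₁ (kPart_isHermitian x) (kPart_isHermitian x') (hPart_isHermitian y),
    f_add₁ hlin₁ (kPart_isHermitian x) (kPart_isHermitian x') (kPart_isHermitian y),
    smul_add, smul_add]
  abel

include hlin₂ in
lemma ES_add₂ (x y y' : Matrix (Fin n) (Fin n) ℂ) :
    extStar f x (y + y') = extStar f x y + extStar f x y' := by
  rw [extStar_def, extStar_def, extStar_def, hPart_add, kPart_add,
    f_add₂ hlin₂ (hPart_isHermitian y) (hPart_isHermitian y') (hPart_isHermitian x),
    f_add₂ hlin₂ (kPart_isHermitian y) (kPart_isHermitian y') (hPart_isHermitian x),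
    f_add₂ hlin₂ (hPart_isHermitian y) (hPart_isHermitian y') (kPart_isHermitian x),
    f_add₂ hlin₂ (kPart_isHermitian y) (kPart_isHermitian y') (kPart_isHermitian x),
    smul_add, smul_add]
  abel

include hlin₁ in
lemma ES_smulR₁ (r : ℝ) (x y : Matrix (Fin n) (Fin n) ℂ) :
    extStar f ((r:ℂ) • x) y = (r:ℂ) • extStar f x y := by
  rw [extStar_def, extStar_def, hPart_real_smul, kPart_real_smul,
    f_smul₁ hlin₁ r (hPart_isHermitian x) (hPart_isHermitian y),
    f_smul₁ hlin₁ r (hPart_isHermitian x) (kPart_isHermitian y),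
    f_smul₁ hlin₁ r (kPart_isHermitian x) (hPart_isHermitian y),
    f_smul₁ hlin₁ r (kPart_isHermitian x) (kPart_isHermitian y)]
  module

include hlin₂ in
lemma ES_smulR₂ (r : ℝ) (x y : Matrix (Fin n) (Fin n) ℂ) :
    extStar f x ((r:ℂ) • y) = (r:ℂ) • extStar f x y := by
  rw [extStar_def, extStar_def, hPart_real_smul, kPart_real_smul,
    f_smul₂ hlin₂ r (hPart_isHermitian y) (hPart_isHermitian x),
    f_smul₂ hlin₂ r (kPart_isHermitian y) (hPart_isHermitian x),
    f_smul₂ hlin₂ r (hPart_isHermitian y) (kPart_isHermitian x),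
    f_smul₂ hlin₂ r (kPart_isHermitian y) (kPart_isHermitian x)]
  module

include hlin₁ in
lemma ES_smulI₁ (x y : Matrix (Fin n) (Fin n) ℂ) :
    extStar f (Complex.I • x) y = Complex.I • extStar f x y := by
  rw [extStar_def, extStar_def, hPart_I_smul, kPart_I_smul,
    f_neg₁ hlin₁ (hPart_isHermitian x) (hPart_isHermitian y),
    f_neg₁ hlin₁ (hPart_isHermitian x) (kPart_isHermitian y)]
  have hII : ∀ (A : Matrix (Fin n) (Fin n) ℂ), Complex.I • (Complex.I • A) = -A := by
    intro A
    rw [smul_smul, Complex.I_mul_I, neg_one_smul]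
  rw [smul_sub, smul_sub, smul_sub, hII, hII]
  module

include hlin₂ in
lemma ES_smulI₂ (x y : Matrix (Fin n) (Fin n) ℂ) :
    extStar f x (Complex.I • y) = Complex.I • extStar f x y := by
  rw [extStar_def, extStar_def, hPart_I_smul, kPart_I_smul,
    f_neg₂ hlin₂ (hPart_isHermitian y) (hPart_isHermitian x),
    f_neg₂ hlin₂ (hPart_isHermitian y) (kPart_isHermitian x)]
  have hII : ∀ (A : Matrix (Fin n) (Fin n) ℂ), Complex.I • (Complex.I • A) = -A := by
    intro A
    rw [smul_smul, Complex.I_mul_I, neg_one_smul]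
  rw [smul_sub, smul_sub, smul_sub, hII, hII]
  module

include hlin₁ in
lemma ES_smulC₁ (c : ℂ) (x y : Matrix (Fin n) (Fin n) ℂ) :
    extStar f (c • x) y = c • extStar f x y := by
  have hdec : c • x = (c.re:ℂ) • x + (c.im:ℂ) • (Complex.I • x) := by
    rw [smul_smul, ← add_smul, Complex.re_add_im]
  rw [hdec, ES_add₁ hlin₁, ES_smulR₁ hlin₁, ES_smulR₁ hlin₁, ES_smulI₁ hlin₁,
    smul_smul, ← add_smul, Complex.re_add_im]

include hlin₂ in
lemma ES_smulC₂ (c : ℂ) (x y : Matrix (Fin n) (Fin n) ℂ) :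
    extStar f x (c • y) = c • extStar f x y := by
  have hdec : c • y = (c.re:ℂ) • y + (c.im:ℂ) • (Complex.I • y) := by
    rw [smul_smul, ← add_smul, Complex.re_add_im]
  rw [hdec, ES_add₂ hlin₂, ES_smulR₂ hlin₂, ES_smulR₂ hlin₂, ES_smulI₂ hlin₂,
    smul_smul, ← add_smul, Complex.re_add_im]

end esl

section dmap

include hlin₁ hlin₂ hcomm in
lemma hpol {a b : Matrix (Fin n) (Fin n) ℂ} (ha : a.IsHermitian) (hb : b.IsHermitian) :
    f a b + f b a = a * b + b * a := by
  have h := hcomm (a+b) (a+b) (ha.add hb) (ha.add hb) rfl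
  rw [f_add₁ hlin₁ ha hb (ha.add hb), f_add₂ hlin₂ ha hb ha, f_add₂ hlin₂ ha hb hb,
    hcomm a a ha ha rfl, hcomm b b hb hb rfl, add_mul, mul_add, mul_add] at h
  -- h : a*a + a*b + (b*a + b*b) = a*a + a*b + (b*a + b*b) rearranged
  have goal : f a b + f b a = a * b + b * a := by
    linear_combination (norm := abel) h
  exact goal

include hlin₁ hlin₂ in
lemma ES_herm {a b : Matrix (Fin n) (Fin n) ℂ} (ha : a.IsHermitian) (hb : b.IsHermitian) :
    extStar f a b = f a b := by
  rw [extStar_def, hPart_of_herm ha, hPart_of_herm hb, kPart_of_herm ha, kPart_of_herm hb,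
    f_zero₂ hlin₂ ha, f_zero₁ hlin₁ hb, f_zero₁ hlin₁ Matrix.isHermitian_zero]
  simp

lemma pairkey (P K Q L : Matrix (Fin n) (Fin n) ℂ) :
    (P*Q + Q*P) - Complex.I•(P*L + L*P) - Complex.I•(K*Q + Q*K) - (K*L + L*K)
      = (P + (-Complex.I)•K)*(Q + (-Complex.I)•L)
        + (Q + (-Complex.I)•L)*(P + (-Complex.I)•K) := by
  have hII : (-Complex.I) * (-Complex.I) = -1 := by
    rw [neg_mul_neg, Complex.I_mul_I]
  simp only [add_mul, mul_add, Matrix.smul_mul, Matrix.mul_smul, smul_smul, hII,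
    neg_one_smul]
  module

include hlin₁ hlin₂ hcomm in
lemma ES_pair (x y : Matrix (Fin n) (Fin n) ℂ) :
    extStar f x y + extStar f y x = x * y + y * x := by
  rw [extStar_def, extStar_def]
  have p1 := hpol hlin₁ hlin₂ hcomm (hPart_isHermitian x) (hPart_isHermitian y)
  have p2 := hpol hlin₁ hlin₂ hcomm (hPart_isHermitian x) (kPart_isHermitian y)
  have p3 := hpol hlin₁ hlin₂ hcomm (kPart_isHermitian x) (hPart_isHermitian y)
  have p4 := hpol hlin₁ hlin₂ hcomm (kPart_isHermitian x) (kPart_isHermitian y)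
  have key := pairkey (hPart x) (kPart x) (hPart y) (kPart y)
  rw [← decomp x, ← decomp y] at key
  -- combine everything
  calc f (hPart x) (hPart y) - Complex.I • f (hPart x) (kPart y)
        - Complex.I • f (kPart x) (hPart y) - f (kPart x) (kPart y)
        + (f (hPart y) (hPart x) - Complex.I • f (hPart y) (kPart x)
          - Complex.I • f (kPart y) (hPart x) - f (kPart y) (kPart x))
      = (f (hPart x) (hPart y) + f (hPart y) (hPart x))
        - Complex.I • (f (hPart x) (kPart y) + f (kPart y) (hPart x))
        - Complex.I • (f (kPart x) (hPart y) + f (hPart y) (kPart x))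
        - (f (kPart x) (kPart y) + f (kPart y) (kPart x)) := by
        rw [smul_add, smul_add]; abel
    _ = (hPart x * hPart y + hPart y * hPart x)
        - Complex.I • (hPart x * kPart y + kPart y * hPart x)
        - Complex.I • (kPart x * hPart y + hPart y * kPart x)
        - (kPart x * kPart y + kPart y * kPart x) := by
        rw [p1, p2, p3, p4]
    _ = x * y + y * x := key

/-- The defect bilinear form. -/
noncomputable def Dfun (f : Matrix (Fin n) (Fin n) ℂ → Matrix (Fin n) (Fin n) ℂ → Matrix (Fin n) (Fin n) ℂ)
    (x y : Matrix (Fin n) (Fin n) ℂ) : Matrix (Fin n) (Fin n) ℂ :=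
  extStar f x y - (2:ℂ)⁻¹ • (x*y + y*x)

include hlin₁ hlin₂ in
lemma Dfun_linear :
    (∀ x x' y, Dfun f (x + x') y = Dfun f x y + Dfun f x' y)
    ∧ (∀ (c : ℂ) x y, Dfun f (c • x) y = c • Dfun f x y)
    ∧ (∀ x y y', Dfun f x (y + y') = Dfun f x y + Dfun f x y')
    ∧ (∀ (c : ℂ) x y, Dfun f x (c • y) = c • Dfun f x y) := by
  refine ⟨fun x x' y => ?_, fun c x y => ?_, fun x y y' => ?_, fun c x y => ?_⟩
  · unfold Dfun
    rw [ES_add₁ hlin₁, add_mul, mul_add]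
    module
  · unfold Dfun
    rw [ES_smulC₁ hlin₁, Matrix.smul_mul, Matrix.mul_smul]
    module
  · unfold Dfun
    rw [ES_add₂ hlin₂, add_mul, mul_add]
    module
  · unfold Dfun
    rw [ES_smulC₂ hlin₂, Matrix.smul_mul, Matrix.mul_smul]
    module

/-- The defect form, bundled as a bilinear map. -/
noncomputable def Dmap
    (hlin₁ : ∀ (r : ℝ) (x y z : Matrix (Fin n) (Fin n) ℂ),
      x.IsHermitian → y.IsHermitian → z.IsHermitian →
      f (r • x + y) z = r • f x z + f y z)
    (hlin₂ : ∀ (r : ℝ) (x y z : Matrix (Fin n) (Fin n) ℂ),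
      x.IsHermitian → y.IsHermitian → z.IsHermitian →
      f x (r • y + z) = r • f x y + f x z) :
    Matrix (Fin n) (Fin n) ℂ →ₗ[ℂ] Matrix (Fin n) (Fin n) ℂ →ₗ[ℂ] Matrix (Fin n) (Fin n) ℂ :=
  LinearMap.mk₂ ℂ (Dfun f) (Dfun_linear hlin₁ hlin₂).1 (Dfun_linear hlin₁ hlin₂).2.1
    (Dfun_linear hlin₁ hlin₂).2.2.1 (Dfun_linear hlin₁ hlin₂).2.2.2

lemma Dmap_apply (x y : Matrix (Fin n) (Fin n) ℂ) :
    Dmap hlin₁ hlin₂ x y = Dfun f x y := rfl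

include hlin₁ hlin₂ hcomm in
lemma D_anti (x y : Matrix (Fin n) (Fin n) ℂ) :
    Dmap hlin₁ hlin₂ x y = - Dmap hlin₁ hlin₂ y x := by
  rw [Dmap_apply, Dmap_apply]
  have hp := ES_pair hlin₁ hlin₂ hcomm x y
  have h2 : (2:ℂ)⁻¹ • (x*y + y*x) + (2:ℂ)⁻¹ • (y*x + x*y) = x*y + y*x := by
    rw [add_comm (y*x), ← add_smul]
    norm_num
  have hsum : Dfun f x y + Dfun f y x = 0 := by
    calc Dfun f x y + Dfun f y x
        = (extStar f x y + extStar f y x)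
          - ((2:ℂ)⁻¹ • (x*y + y*x) + (2:ℂ)⁻¹ • (y*x + x*y)) := by
          unfold Dfun; abel
      _ = (x*y + y*x) - (x*y + y*x) := by rw [hp, h2]
      _ = 0 := sub_self _
  exact eq_neg_of_add_eq_zero_left hsum

include hlin₁ hlin₂ hcomm in
lemma D_vanish {a b : Matrix (Fin n) (Fin n) ℂ} (ha : a.IsHermitian) (hb : b.IsHermitian)
    (hab : a * b = b * a) : Dmap hlin₁ hlin₂ a b = 0 := by
  rw [Dmap_apply]
  unfold Dfun
  rw [ES_herm hlin₁ hlin₂ ha hb, hcomm a b ha hb hab, ← hab, ← two_smul ℂ, smul_smul]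
  norm_num

lemma herm_sq {h : Matrix (Fin n) (Fin n) ℂ} (hh : h.IsHermitian) : (h*h).IsHermitian := by
  unfold Matrix.IsHermitian
  rw [conjTranspose_mul, hh]

include hlin₁ hlin₂ hcomm in
lemma Qzero {h : Matrix (Fin n) (Fin n) ℂ} (hh : h.IsHermitian) :
    Dmap hlin₁ hlin₂ h (h*h) = 0 :=
  D_vanish hlin₁ hlin₂ hcomm hh (herm_sq hh) (mul_assoc h h h).symm

/-- The trilinear polarization form. -/
noncomputable def Ef
    (hlin₁ : ∀ (r : ℝ) (x y z : Matrix (Fin n) (Fin n) ℂ),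
      x.IsHermitian → y.IsHermitian → z.IsHermitian →
      f (r • x + y) z = r • f x z + f y z)
    (hlin₂ : ∀ (r : ℝ) (x y z : Matrix (Fin n) (Fin n) ℂ),
      x.IsHermitian → y.IsHermitian → z.IsHermitian →
      f x (r • y + z) = r • f x y + f x z)
    (a b s : Matrix (Fin n) (Fin n) ℂ) : Matrix (Fin n) (Fin n) ℂ :=
  Dmap hlin₁ hlin₂ s (a*b+b*a) + Dmap hlin₁ hlin₂ a (b*s+s*b) + Dmap hlin₁ hlin₂ b (a*s+s*a)

include hcomm in
lemma E_herm {a b s : Matrix (Fin n) (Fin n) ℂ} (ha : a.IsHermitian) (hb : b.IsHermitian)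
    (hs : s.IsHermitian) : Ef hlin₁ hlin₂ a b s = 0 := by
  have hQ : ∀ u : Matrix (Fin n) (Fin n) ℂ, u.IsHermitian → Dmap hlin₁ hlin₂ u (u*u) = 0 :=
    fun u hu => Qzero hlin₁ hlin₂ hcomm hu
  have E_eq : Ef hlin₁ hlin₂ a b s
      = Dmap hlin₁ hlin₂ (a+b+s) ((a+b+s)*(a+b+s))
        - Dmap hlin₁ hlin₂ (a+b) ((a+b)*(a+b))
        - Dmap hlin₁ hlin₂ (a+s) ((a+s)*(a+s))
        - Dmap hlin₁ hlin₂ (b+s) ((b+s)*(b+s))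
        + Dmap hlin₁ hlin₂ a (a*a) + Dmap hlin₁ hlin₂ b (b*b)
        + Dmap hlin₁ hlin₂ s (s*s) := by
    unfold Ef
    simp only [add_mul, mul_add, map_add, LinearMap.add_apply]
    abel
  rw [E_eq, hQ _ ha, hQ _ hb, hQ _ hs, hQ _ (ha.add hb), hQ _ (ha.add hs), hQ _ (hb.add hs),
    hQ _ ((ha.add hb).add hs)]
  simp

lemma E_add₁ (a a' b s : Matrix (Fin n) (Fin n) ℂ) :
    Ef hlin₁ hlin₂ (a + a') b s = Ef hlin₁ hlin₂ a b s + Ef hlin₁ hlin₂ a' b s := by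
  unfold Ef
  simp only [add_mul, mul_add, map_add, LinearMap.add_apply]
  abel

lemma E_smul₁ (c : ℂ) (a b s : Matrix (Fin n) (Fin n) ℂ) :
    Ef hlin₁ hlin₂ (c • a) b s = c • Ef hlin₁ hlin₂ a b s := by
  unfold Ef
  simp only [Matrix.smul_mul, Matrix.mul_smul, ← smul_add, _root_.map_smul,
    LinearMap.smul_apply]

lemma E_add₂ (a b b' s : Matrix (Fin n) (Fin n) ℂ) :
    Ef hlin₁ hlin₂ a (b + b') s = Ef hlin₁ hlin₂ a b s + Ef hlin₁ hlin₂ a b' s := by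
  unfold Ef
  simp only [add_mul, mul_add, map_add, LinearMap.add_apply]
  abel

lemma E_smul₂ (c : ℂ) (a b s : Matrix (Fin n) (Fin n) ℂ) :
    Ef hlin₁ hlin₂ a (c • b) s = c • Ef hlin₁ hlin₂ a b s := by
  unfold Ef
  simp only [Matrix.smul_mul, Matrix.mul_smul, ← smul_add, _root_.map_smul,
    LinearMap.smul_apply]

lemma E_add₃ (a b s s' : Matrix (Fin n) (Fin n) ℂ) :
    Ef hlin₁ hlin₂ a b (s + s') = Ef hlin₁ hlin₂ a b s + Ef hlin₁ hlin₂ a b s' := by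
  unfold Ef
  simp only [add_mul, mul_add, map_add, LinearMap.add_apply]
  abel

lemma E_smul₃ (c : ℂ) (a b s : Matrix (Fin n) (Fin n) ℂ) :
    Ef hlin₁ hlin₂ a b (c • s) = c • Ef hlin₁ hlin₂ a b s := by
  unfold Ef
  simp only [Matrix.smul_mul, Matrix.mul_smul, ← smul_add, _root_.map_smul,
    LinearMap.smul_apply]

include hcomm in
lemma E_all (a b s : Matrix (Fin n) (Fin n) ℂ) : Ef hlin₁ hlin₂ a b s = 0 := by
  have h3 : ∀ u v : Matrix (Fin n) (Fin n) ℂ, u.IsHermitian → v.IsHermitian →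
      ∀ w, Ef hlin₁ hlin₂ u v w = 0 := by
    intro u v hu hv w
    rw [decomp w, E_add₃, E_smul₃,
      E_herm hlin₁ hlin₂ hcomm hu hv (hPart_isHermitian w),
      E_herm hlin₁ hlin₂ hcomm hu hv (kPart_isHermitian w)]
    simp
  have h2 : ∀ u : Matrix (Fin n) (Fin n) ℂ, u.IsHermitian →
      ∀ v w, Ef hlin₁ hlin₂ u v w = 0 := by
    intro u hu v w
    rw [decomp v, E_add₂, E_smul₂,
      h3 u _ hu (hPart_isHermitian v) w, h3 u _ hu (kPart_isHermitian v) w]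
    simp
  rw [decomp a, E_add₁, E_smul₁,
    h2 _ (hPart_isHermitian a) b s, h2 _ (kPart_isHermitian a) b s]
  simp

end dmap

end flem


end ExtStarProof

/-- If a real-bilinear map `⋆ : H_n × H_n → H_n` satisfies `x⋆y = xy` on all commuting
pairs, then its complex-bilinear extension to `M_n × M_n` satisfies `x⋆y = xy` on all
commuting pairs `x, y ∈ M_n`. -/
theorem extStar_eq_mul_of_commute (n : ℕ)
    (f : Matrix (Fin n) (Fin n) ℂ → Matrix (Fin n) (Fin n) ℂ → Matrix (Fin n) (Fin n) ℂ)
    (hH : ∀ x y, x.IsHermitian → y.IsHermitian → (f x y).IsHermitian)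
    (hlin₁ : ∀ (r : ℝ) (x y z : Matrix (Fin n) (Fin n) ℂ),
      x.IsHermitian → y.IsHermitian → z.IsHermitian →
      f (r • x + y) z = r • f x z + f y z)
    (hlin₂ : ∀ (r : ℝ) (x y z : Matrix (Fin n) (Fin n) ℂ),
      x.IsHermitian → y.IsHermitian → z.IsHermitian →
      f x (r • y + z) = r • f x y + f x z)
    (hcomm : ∀ x y, x.IsHermitian → y.IsHermitian → x * y = y * x → f x y = x * y) :
    ∀ x y : Matrix (Fin n) (Fin n) ℂ, x * y = y * x → extStar f x y = x * y := by
  intro x y hxy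
  have hD := ExtStarProof.core (ExtStarProof.Dmap hlin₁ hlin₂)
      (ExtStarProof.D_anti hlin₁ hlin₂ hcomm)
      (fun a b s => ExtStarProof.E_all hlin₁ hlin₂ hcomm a b s) x y hxy
  rw [ExtStarProof.Dmap_apply] at hD
  unfold ExtStarProof.Dfun at hD
  have h1 := sub_eq_zero.mp hD
  rw [h1, ← hxy, ← two_smul ℂ, smul_smul]
  norm_num
end

section
/- If x is a normal complex n-by-n matrix and xy = yx, then x† y = y x†. -/
open Matrix NormedSpace

open scoped Matrix.Norms.L2Operator ComplexConjugate

private lemma fuglede_aux {R : Type*} [Ring R] (a b c d y : R)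
    (hy : b * y = y * b) (hb : b * c = 1) : a * b * y * c * d = a * y * d := by
  rw [mul_assoc a b y, hy, ← mul_assoc a y b, mul_assoc (a * y) b c, hb, mul_one]

set_option maxHeartbeats 2000000 in
/-- Fuglede's theorem for matrices: if `x` is normal and `xy = yx`, then `x†y = yx†`. -/
theorem fuglede (n : ℕ) (x y : Matrix (Fin n) (Fin n) ℂ)
    (hnormal : x * xᴴ = xᴴ * x) (hcomm : x * y = y * x) :
    xᴴ * y = y * xᴴ := by
  rcases subsingleton_or_nontrivial (Matrix (Fin n) (Fin n) ℂ) with h | h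
  · exact Subsingleton.elim _ _
  let +nondep : NormedAlgebra ℚ (Matrix (Fin n) (Fin n) ℂ) :=
    .restrictScalars ℚ ℂ (Matrix (Fin n) (Fin n) ℂ)
  have hC : Commute xᴴ x := hnormal.symm
  have hxy : Commute x y := hcomm
  set s : ℂ → Matrix (Fin n) (Fin n) ℂ := fun z => z • xᴴ - conj z • x with hs
  have hskew : ∀ z : ℂ, s z ∈ skewAdjoint (Matrix (Fin n) (Fin n) ℂ) := by
    intro z
    rw [skewAdjoint.mem_iff]
    show star (z • xᴴ - conj z • x) = -(z • xᴴ - conj z • x)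
    simp only [star_sub, star_smul, star_eq_conjTranspose, conjTranspose_conjTranspose,
      starRingEnd_apply, star_star, neg_sub]
  have hsplit : ∀ z : ℂ, exp (s z) = exp (z • xᴴ) * exp ((-(conj z)) • x) := by
    intro z
    show exp (z • xᴴ - conj z • x) = _
    have he : z • xᴴ - conj z • x = z • xᴴ + (-(conj z)) • x := by
      rw [neg_smul, sub_eq_add_neg]
    rw [he, NormedSpace.exp_add_of_commute ((hC.smul_left z).smul_right (-(conj z)))]
  have hsplit' : ∀ z : ℂ, exp (-(s z)) = exp ((conj z) • x) * exp ((-z) • xᴴ) := by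
    intro z
    have he : -(s z) = (conj z) • x + (-z) • xᴴ := by
      show -(z • xᴴ - conj z • x) = _
      rw [neg_smul]; abel
    rw [he, NormedSpace.exp_add_of_commute ((hC.symm.smul_left (conj z)).smul_right (-z))]
  set f : ℂ → Matrix (Fin n) (Fin n) ℂ :=
    fun z => exp (z • xᴴ) * y * exp ((-z) • xᴴ) with hf
  have hfu : ∀ z : ℂ, f z = exp (s z) * y * exp (-(s z)) := by
    intro z
    have hy : exp ((-(conj z)) • x) * y = y * exp ((-(conj z)) • x) :=
      (Commute.exp_left (hxy.smul_left (-(conj z))) ).eq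
    have hb : exp ((-(conj z)) • x) * exp ((conj z) • x) = 1 := by
      rw [← NormedSpace.exp_add_of_commute (((Commute.refl x).smul_left (-(conj z))).smul_right (conj z))]
      simp
    show exp (z • xᴴ) * y * exp ((-z) • xᴴ) = _
    rw [hsplit z, hsplit' z, ← mul_assoc]
    exact (fuglede_aux (exp (z • xᴴ)) _ _ (exp ((-z) • xᴴ)) y hy hb).symm
  have hnorm : ∀ z : ℂ, ‖f z‖ = ‖y‖ := by
    intro z
    rw [hfu z]
    have hu : exp (s z) ∈ unitary (Matrix (Fin n) (Fin n) ℂ) :=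
      exp_mem_unitary_of_mem_skewAdjoint (hskew z)
    have hv : exp (-(s z)) ∈ unitary (Matrix (Fin n) (Fin n) ℂ) :=
      exp_mem_unitary_of_mem_skewAdjoint (neg_mem (hskew z))
    rw [CStarRing.norm_mul_mem_unitary (exp (s z) * y) hv,
      CStarRing.norm_mem_unitary_mul y hu]
  have d1 : Differentiable ℂ (fun z : ℂ => exp (z • xᴴ)) := fun z =>
    (hasDerivAt_exp_smul_const (𝕂 := ℂ) xᴴ z).differentiableAt
  have d2 : Differentiable ℂ (fun z : ℂ => exp ((-z) • xᴴ)) :=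
    d1.comp differentiable_neg
  have hdiff : Differentiable ℂ f := (d1.mul_const y).mul d2
  have hbdd : Bornology.IsBounded (Set.range f) := by
    apply Metric.isBounded_range_iff.mpr ⟨2 * ‖y‖, fun a b => ?_⟩
    calc dist (f a) (f b) ≤ ‖f a‖ + ‖f b‖ := dist_le_norm_add_norm _ _
      _ = 2 * ‖y‖ := by rw [hnorm a, hnorm b]; ring
  have hconst : ∀ z : ℂ, f z = f 0 := fun z =>
    hdiff.apply_eq_apply_of_bounded hbdd z 0
  have hf0 : f 0 = y := by simp [hf]
  have hcomm' : ∀ z : ℂ, exp (z • xᴴ) * y = y * exp (z • xᴴ) := by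
    intro z
    have hz : f z = y := (hconst z).trans hf0
    have hinv : exp ((-z) • xᴴ) * exp (z • xᴴ) = 1 := by
      rw [← NormedSpace.exp_add_of_commute (((Commute.refl xᴴ).smul_left (-z)).smul_right z)]
      simp
    calc exp (z • xᴴ) * y
        = exp (z • xᴴ) * y * (exp ((-z) • xᴴ) * exp (z • xᴴ)) := by
          rw [hinv, mul_one]
      _ = f z * exp (z • xᴴ) := by rw [hf]; simp only [mul_assoc]
      _ = y * exp (z • xᴴ) := by rw [hz]
  have h1 : HasDerivAt (fun z : ℂ => exp (z • xᴴ) * y)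
      (exp ((0 : ℂ) • xᴴ) * xᴴ * y) 0 :=
    (hasDerivAt_exp_smul_const (𝕂 := ℂ) xᴴ 0).mul_const y
  have h2 : HasDerivAt (fun z : ℂ => y * exp (z • xᴴ))
      (y * (exp ((0 : ℂ) • xᴴ) * xᴴ)) 0 :=
    (hasDerivAt_exp_smul_const (𝕂 := ℂ) xᴴ 0).const_mul y
  have hfun : (fun z : ℂ => exp (z • xᴴ) * y) = fun z : ℂ => y * exp (z • xᴴ) :=
    funext hcomm'
  have h2' : HasDerivAt (fun z : ℂ => exp (z • xᴴ) * y)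
      (y * (exp ((0 : ℂ) • xᴴ) * xᴴ)) 0 := hfun ▸ h2
  have hkey := h1.unique h2'
  simpa using hkey
end
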